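/- arXiv:2302.09408 — 8 statements merged into one kernel-verified Lean document; each statement's English description precedes it below -/
import Mathlib

section
/- Let d ≥ 1, let Ω ⊆ ℝ^d be a nonempty compact convex set, let ℓ_1, …, ℓ_T ∈ ℝ^d, and let ψ_0, ψ_1, …, ψ_T : ℝ^d → ℝ be convex functions that are differentiable on an open set containing Ω. For each t = 1, …, T let p_t be a minimizer over Ω of p ↦ ⟨p, Σ_{τ=1}^{t−1} ℓ_τ⟩ + ψ_t(p). Then for every u ∈ Ω, Σ_{t=1}^{T} ⟨p_t − u, ℓ_t⟩ ≤ ψ_0(u) − min_{p∈Ω} ψ_0(p) + Σ_{t=1}^{T} (ψ_t(u) − ψ_t(p_t) − ψ_{t−1}(u) + ψ_{t−1}(p_t)) + Σ_{t=1}^{T} max_{p∈Ω} (⟨p_t − p, ℓ_t⟩ − D_{ψ_t}(p, p_t)). -/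
open Finset Filter Topology

/-- **FTRL regret decomposition.**
Let `d ≥ 1`, `Ω ⊆ ℝ^d` a nonempty compact convex set, losses `ℓ 1, …, ℓ T ∈ ℝ^d`, and
convex regularizers `ψ 0, …, ψ T : ℝ^d → ℝ` that are differentiable on an open set `U ⊇ Ω`.
If each `p t` (for `1 ≤ t ≤ T`) minimizes `p ↦ ⟨p, ∑_{τ=1}^{t-1} ℓ τ⟩ + ψ t p` over `Ω`,
then for every `u ∈ Ω`, the regret `∑_{t=1}^T ⟨p t - u, ℓ t⟩` is bounded by the penalty
term plus the stability term, where the Bregman divergence is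
`D_{ψ t}(q, p t) = ψ t q - ψ t (p t) - ⟨∇(ψ t)(p t), q - p t⟩`. -/
theorem ftrl_regret_decomposition
    (d T : ℕ) (hd : 1 ≤ d)
    (Ω U : Set (Fin d → ℝ))
    (hΩne : Ω.Nonempty) (hΩcomp : IsCompact Ω) (hΩconv : Convex ℝ Ω)
    (hUopen : IsOpen U) (hΩU : Ω ⊆ U)
    (ℓ : ℕ → Fin d → ℝ)
    (ψ : ℕ → (Fin d → ℝ) → ℝ)
    (hψconv : ∀ t ≤ T, ConvexOn ℝ Set.univ (ψ t))
    (hψdiff : ∀ t ≤ T, DifferentiableOn ℝ (ψ t) U)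
    (p : ℕ → Fin d → ℝ)
    (hp_mem : ∀ t, 1 ≤ t → t ≤ T → p t ∈ Ω)
    (hp_min : ∀ t, 1 ≤ t → t ≤ T → ∀ q ∈ Ω,
      (∑ i, p t i * (∑ τ ∈ Finset.Icc 1 (t - 1), ℓ τ i)) + ψ t (p t)
        ≤ (∑ i, q i * (∑ τ ∈ Finset.Icc 1 (t - 1), ℓ τ i)) + ψ t q)
    (u : Fin d → ℝ) (hu : u ∈ Ω) :
    ∑ t ∈ Finset.Icc 1 T, ∑ i, (p t i - u i) * ℓ t i
      ≤ (ψ 0 u - sInf (ψ 0 '' Ω))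
        + (∑ t ∈ Finset.Icc 1 T, (ψ t u - ψ t (p t) - ψ (t - 1) u + ψ (t - 1) (p t)))
        + (∑ t ∈ Finset.Icc 1 T,
            sSup ((fun q => (∑ i, (p t i - q i) * ℓ t i)
              - (ψ t q - ψ t (p t) - fderiv ℝ (ψ t) (p t) (q - p t))) '' Ω)) := by
  classical
  -- abbreviations
  set L : ℕ → Fin d → ℝ := fun t i => ∑ τ ∈ Finset.Icc 1 t, ℓ τ i with hLdef
  set S : ℕ → ℝ := fun t =>
    sSup ((fun q => (∑ i, (p t i - q i) * ℓ t i)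
      - (ψ t q - ψ t (p t) - fderiv ℝ (ψ t) (p t) (q - p t))) '' Ω) with hSdef
  set Φ : ℕ → ℝ := fun t => (∑ i, p t i * L (t - 1) i) + ψ t (p t) with hΦdef
  -- continuity of the regularizers on Ω
  have hcont : ∀ t ≤ T, ContinuousOn (ψ t) Ω :=
    fun t ht => ((hψdiff t ht).continuousOn).mono hΩU
  -- the infimum of ψ 0 is below every value on Ω
  have hbb : BddBelow (ψ 0 '' Ω) :=
    (hΩcomp.image_of_continuousOn (hcont 0 (Nat.zero_le T))).bddBelow
  have hm : ∀ x ∈ Ω, sInf (ψ 0 '' Ω) ≤ ψ 0 x := fun x hx => csInf_le hbb ⟨x, hx, rfl⟩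
  -- differentiability at points of Ω
  have hdiffAt : ∀ t ≤ T, ∀ x ∈ Ω, DifferentiableAt ℝ (ψ t) x := fun t ht x hx =>
    ((hψdiff t ht) x (hΩU hx)).differentiableAt (hUopen.mem_nhds (hΩU hx))
  -- L recursion
  have hLsucc : ∀ t, 1 ≤ t → ∀ i, L t i = L (t - 1) i + ℓ t i := by
    intro t ht i
    obtain ⟨s, rfl⟩ : ∃ s, t = s + 1 := ⟨t - 1, by omega⟩
    simp [hLdef, Finset.sum_Icc_succ_top (by omega : 1 ≤ s + 1)]
  -- dot product splitting
  have hdot_sub : ∀ (a b c : Fin d → ℝ),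
      ∑ i, (a i - b i) * c i = (∑ i, a i * c i) - ∑ i, b i * c i := by
    intro a b c; simp [sub_mul, Finset.sum_sub_distrib]
  have hdot_addL : ∀ t, 1 ≤ t → ∀ w : Fin d → ℝ,
      ∑ i, w i * L t i = (∑ i, w i * L (t - 1) i) + ∑ i, w i * ℓ t i := by
    intro t ht w
    simp only [hLsucc t ht, mul_add, Finset.sum_add_distrib]
  -- first-order optimality condition
  have foc : ∀ t, 1 ≤ t → t ≤ T → ∀ q ∈ Ω,
      0 ≤ fderiv ℝ (ψ t) (p t) (q - p t) + ∑ i, (q i - p t i) * L (t - 1) i := by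
    intro t ht1 ht2 q hq
    have hx : p t ∈ Ω := hp_mem t ht1 ht2
    set x := p t with hxdef
    set v : Fin d → ℝ := q - x with hvdef
    set c : ℝ := ∑ i, (q i - x i) * L (t - 1) i with hcdef
    have hdiff : DifferentiableAt ℝ (ψ t) x := hdiffAt t ht2 x hx
    have hline : HasDerivAt (fun s : ℝ => x + s • v) v 0 := by
      simpa using ((hasDerivAt_id (0 : ℝ)).smul_const v).const_add x
    have hF : HasFDerivAt (ψ t) (fderiv ℝ (ψ t) x) (x + (0 : ℝ) • v) := by
      simpa using hdiff.hasFDerivAt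
    have hφ : HasDerivAt (fun s : ℝ => ψ t (x + s • v)) (fderiv ℝ (ψ t) x v) 0 :=
      hF.comp_hasDerivAt 0 hline
    -- slope lower bound from minimality
    have hslope : ∀ s ∈ Set.Ioc (0 : ℝ) 1,
        -c ≤ slope (fun s : ℝ => ψ t (x + s • v)) 0 s := by
      intro s hs
      have hmem : x + s • v ∈ Ω := by
        have h := hΩconv hx hq (by linarith [hs.2] : (0:ℝ) ≤ 1 - s) (le_of_lt hs.1)
          (by ring : (1 - s) + s = 1)
        have heq : (1 - s) • x + s • q = x + s • v := by
          funext i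
          simp only [Pi.add_apply, Pi.smul_apply, hvdef, Pi.sub_apply, smul_eq_mul]
          ring
        rwa [heq] at h
      have hmin := hp_min t ht1 ht2 (x + s • v) hmem
      rw [← hxdef] at hmin
      have hsum : ∑ i, (x + s • v) i * (∑ τ ∈ Finset.Icc 1 (t - 1), ℓ τ i)
          = (∑ i, x i * (∑ τ ∈ Finset.Icc 1 (t - 1), ℓ τ i)) + s * c := by
        rw [hcdef, Finset.mul_sum, ← Finset.sum_add_distrib]
        refine Finset.sum_congr rfl fun i _ => ?_
        simp only [Pi.add_apply, Pi.smul_apply, hvdef, Pi.sub_apply, smul_eq_mul, hLdef]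
        ring
      rw [hsum] at hmin
      have hψineq : ψ t x ≤ s * c + ψ t (x + s • v) := by linarith
      have h0 : x + (0:ℝ) • v = x := by simp
      simp only [slope_def_field, h0, sub_zero]
      rw [le_div_iff₀ hs.1]
      linarith
    -- pass to the limit
    have hmemIoc : Set.Ioc (0:ℝ) 1 ∈ 𝓝[>] (0:ℝ) :=
      Ioc_mem_nhdsGT_of_mem (by norm_num : (0:ℝ) ∈ Set.Ico (0:ℝ) 1)
    have htend : Filter.Tendsto (slope (fun s : ℝ => ψ t (x + s • v)) 0)
        (𝓝[>] (0:ℝ)) (𝓝 (fderiv ℝ (ψ t) x v)) :=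
      (hasDerivAt_iff_tendsto_slope.mp hφ).mono_left
        (nhdsWithin_mono _ fun y hy => ne_of_gt hy)
    have hlim : -c ≤ fderiv ℝ (ψ t) x v :=
      ge_of_tendsto htend (Filter.eventually_of_mem hmemIoc hslope)
    linarith
  -- the key inequality: value at any q lower-bounds the sup, strengthened by foc
  have key : ∀ t, 1 ≤ t → t ≤ T → ∀ q ∈ Ω,
      (∑ i, (p t i - q i) * ℓ t i) - ((∑ i, q i * L (t - 1) i) + ψ t q - Φ t) ≤ S t := by
    intro t ht1 ht2 q hq
    have hc1 : Continuous fun q : Fin d → ℝ => ∑ i, (p t i - q i) * ℓ t i := by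
      apply continuous_finset_sum
      intro i _
      exact (continuous_const.sub (continuous_apply i)).mul continuous_const
    have hc2 : Continuous fun q : Fin d → ℝ => fderiv ℝ (ψ t) (p t) (q - p t) :=
      (fderiv ℝ (ψ t) (p t)).continuous.comp (continuous_id.sub continuous_const)
    have hcF : ContinuousOn (fun q => (∑ i, (p t i - q i) * ℓ t i)
        - (ψ t q - ψ t (p t) - fderiv ℝ (ψ t) (p t) (q - p t))) Ω :=
      hc1.continuousOn.sub
        (((hcont t ht2).sub continuousOn_const).sub hc2.continuousOn)
    have hbdd : BddAbove ((fun q => (∑ i, (p t i - q i) * ℓ t i)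
        - (ψ t q - ψ t (p t) - fderiv ℝ (ψ t) (p t) (q - p t))) '' Ω) :=
      (hΩcomp.image_of_continuousOn hcF).bddAbove
    have hle : (∑ i, (p t i - q i) * ℓ t i)
        - (ψ t q - ψ t (p t) - fderiv ℝ (ψ t) (p t) (q - p t)) ≤ S t := by
      rw [hSdef]
      exact le_csSup hbdd ⟨q, hq, rfl⟩
    have hfoc := foc t ht1 ht2 q hq
    have hsub : ∑ i, (q i - p t i) * L (t - 1) i
        = (∑ i, q i * L (t - 1) i) - ∑ i, p t i * L (t - 1) i := hdot_sub q (p t) _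
    rw [hsub] at hfoc
    have hΦt : Φ t = (∑ i, p t i * L (t - 1) i) + ψ t (p t) := by
      simp only [hΦdef]
    rw [hΦt]
    linarith
  -- per-step inequality with q = p (t+1)
  have step : ∀ t, 1 ≤ t → t + 1 ≤ T →
      (∑ i, p t i * ℓ t i) + Φ t
        ≤ Φ (t + 1) + (ψ t (p (t + 1)) - ψ (t + 1) (p (t + 1))) + S t := by
    intro t ht1 ht2
    have hq : p (t + 1) ∈ Ω := hp_mem (t + 1) (by omega) ht2
    have h := key t ht1 (by omega) (p (t + 1)) hq
    have h1 : ∑ i, (p t i - p (t + 1) i) * ℓ t i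
        = (∑ i, p t i * ℓ t i) - ∑ i, p (t + 1) i * ℓ t i := hdot_sub _ _ _
    have h2 : ∑ i, p (t + 1) i * L t i
        = (∑ i, p (t + 1) i * L (t - 1) i) + ∑ i, p (t + 1) i * ℓ t i :=
      hdot_addL t ht1 _
    have hΦt1 : Φ (t + 1) = (∑ i, p (t + 1) i * L t i) + ψ (t + 1) (p (t + 1)) := by
      simp only [hΦdef, Nat.add_sub_cancel]
    rw [h1] at h
    rw [h2] at hΦt1
    linarith
  -- main induction
  have main : ∀ n, 1 ≤ n → n ≤ T →
      (∑ t ∈ Finset.Ico 1 n, ∑ i, p t i * ℓ t i) + Φ 1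
        ≤ Φ n + (∑ t ∈ Finset.Ico 1 n, (ψ t (p (t + 1)) - ψ (t + 1) (p (t + 1))))
          + ∑ t ∈ Finset.Ico 1 n, S t := by
    intro n hn
    induction n, hn using Nat.le_induction with
    | base => intro _; simp
    | succ n hn ih =>
      intro hnT
      have ihh := ih (by omega)
      have hst := step n hn hnT
      rw [Finset.sum_Ico_succ_top hn, Finset.sum_Ico_succ_top hn, Finset.sum_Ico_succ_top hn]
      linarith
  -- now assemble
  have hSsum : ∑ t ∈ Finset.Icc 1 T,
      sSup ((fun q => (∑ i, (p t i - q i) * ℓ t i)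
        - (ψ t q - ψ t (p t) - fderiv ℝ (ψ t) (p t) (q - p t))) '' Ω)
      = ∑ t ∈ Finset.Icc 1 T, S t := by simp only [hSdef]
  rw [hSsum]
  rcases Nat.eq_zero_or_pos T with hT0 | hT1
  · subst hT0
    rw [show Finset.Icc 1 0 = (∅ : Finset ℕ) from by simp]
    simp only [Finset.sum_empty]
    have := hm u hu
    linarith
  · -- T ≥ 1
    have hmain := main T hT1 le_rfl
    -- final step with q = u
    have hlast := key T hT1 le_rfl u hu
    have h1 : ∑ i, (p T i - u i) * ℓ T i
        = (∑ i, p T i * ℓ T i) - ∑ i, u i * ℓ T i := hdot_sub _ _ _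
    rw [h1] at hlast
    -- splitting off the top term of Icc 1 T sums
    have hA : ∑ t ∈ Finset.Icc 1 T, ∑ i, p t i * ℓ t i
        = (∑ t ∈ Finset.Ico 1 T, ∑ i, p t i * ℓ t i) + ∑ i, p T i * ℓ T i := by
      rw [← Finset.Ico_add_one_right_eq_Icc, Finset.sum_Ico_succ_top hT1]
    have hSsplit : ∑ t ∈ Finset.Icc 1 T, S t
        = (∑ t ∈ Finset.Ico 1 T, S t) + S T := by
      rw [← Finset.Ico_add_one_right_eq_Icc, Finset.sum_Ico_succ_top hT1]
    -- Φ 1 = ψ 1 (p 1)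
    have hΦ1 : Φ 1 = ψ 1 (p 1) := by
      simp only [hΦdef, hLdef]
      simp
    -- dot of u with the total loss
    have hudot : ∑ t ∈ Finset.Icc 1 T, ∑ i, u i * ℓ t i
        = (∑ i, u i * L (T - 1) i) + ∑ i, u i * ℓ T i := by
      rw [← hdot_addL T hT1 u]
      rw [Finset.sum_comm]
      simp only [hLdef, Finset.mul_sum]
    -- the goal's left-hand side
    have hLHS : ∑ t ∈ Finset.Icc 1 T, ∑ i, (p t i - u i) * ℓ t i
        = (∑ t ∈ Finset.Icc 1 T, ∑ i, p t i * ℓ t i)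
          - ∑ t ∈ Finset.Icc 1 T, ∑ i, u i * ℓ t i := by
      rw [← Finset.sum_sub_distrib]
      exact Finset.sum_congr rfl fun t _ => hdot_sub _ _ _
    -- telescoping of the u-terms of the middle sum
    have htel : ∑ t ∈ Finset.Icc 1 T, (ψ t u - ψ (t - 1) u) = ψ T u - ψ 0 u := by
      rw [← Finset.Ico_add_one_right_eq_Icc, Finset.sum_Ico_eq_sum_range,
        show T + 1 - 1 = T from by omega]
      rw [Finset.sum_congr rfl fun i (_ : i ∈ Finset.range T) =>
        show ψ (1 + i) u - ψ (1 + i - 1) u = ψ (i + 1) u - ψ i u from by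
          congr 2 <;> omega]
      exact Finset.sum_range_sub (fun i => ψ i u) T
    have hmid : ∑ t ∈ Finset.Icc 1 T, (ψ t u - ψ t (p t) - ψ (t - 1) u + ψ (t - 1) (p t))
        = (ψ T u - ψ 0 u) + ∑ t ∈ Finset.Icc 1 T, (ψ (t - 1) (p t) - ψ t (p t)) := by
      rw [← htel, ← Finset.sum_add_distrib]
      exact Finset.sum_congr rfl fun t _ => by ring
    -- reindexing of the regularizer-difference sum
    have hreidx : ∑ t ∈ Finset.Ico 1 T, (ψ t (p (t + 1)) - ψ (t + 1) (p (t + 1)))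
        = ∑ t ∈ Finset.Ico 2 (T + 1), (ψ (t - 1) (p t) - ψ t (p t)) := by
      rw [Finset.sum_Ico_eq_sum_range, Finset.sum_Ico_eq_sum_range]
      rw [show T + 1 - 2 = T - 1 from by omega]
      refine Finset.sum_congr rfl fun i _ => ?_
      rw [show 2 + i - 1 = 1 + i from by omega, show 2 + i = 1 + i + 1 from by omega]
    have hbot : ∑ t ∈ Finset.Icc 1 T, (ψ (t - 1) (p t) - ψ t (p t))
        = (ψ 0 (p 1) - ψ 1 (p 1)) + ∑ t ∈ Finset.Ico 2 (T + 1), (ψ (t - 1) (p t) - ψ t (p t)) := by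
      rw [← Finset.Ico_add_one_right_eq_Icc, Finset.sum_eq_sum_Ico_succ_bot (by omega : 1 < T + 1)]
    have hm1 : sInf (ψ 0 '' Ω) ≤ ψ 0 (p 1) := hm (p 1) (hp_mem 1 le_rfl hT1)
    rw [hLHS, hmid]
    linarith [hmain, hlast, hA, hSsplit, hΦ1, hudot, hreidx, hbot, hm1]
end

section
/- Let 𝒜 be a finite set, η > 0, and let ψ(p) = −(2/η) Σ_{a∈𝒜} √(p(a)) (the Tsallis entropy regularizer). Let p_t ∈ Δ(𝒜) with p_t(a) > 0 for every a, and let ℓ ∈ ℝ^𝒜 satisfy η √(p_t(a)) ℓ(a) ≥ −1/2 for every a. Then max_{p ∈ Δ(𝒜)} { ⟨p_t − p, ℓ⟩ − D_ψ(p, p_t) } ≤ 2η Σ_{a∈𝒜} p_t(a)^{3/2} ℓ(a)². -/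
open Finset

/-!
The Bregman divergence of `ψ` splits over coordinates, and for `x ↦ -(2/η)√x` at `y = s²` it
equals `(√x - s)² / (η s)`. With `r = √x` and `u = η s ℓ`, each coordinate of the objective is
`((s² - r²) u - (r - s)²) / (η s)`, a concave quadratic in `r` whose maximum `s² u² / (1 + u)`
is at most `2 s² u²` as soon as `u ≥ -1/2`.
-/

theorem sq_sub_sq_mul_sub_sub_sq_le (s r u : ℝ) (hu : -(1 / 2) ≤ u) :
    (s ^ 2 - r ^ 2) * u - (r - s) ^ 2 ≤ 2 * s ^ 2 * u ^ 2 := by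
  -- `(1 + u) * (RHS - LHS) = ((1 + u) * (s - r) - s * u) ^ 2 + (s * u) ^ 2 * (1 + 2 * u)`
  nlinarith [sq_nonneg ((1 + u) * (s - r) - s * u),
    mul_nonneg (sq_nonneg (s * u)) (by linarith : (0 : ℝ) ≤ 1 + 2 * u)]

theorem rpow_three_halves_eq_sqrt_pow_three {x : ℝ} (hx : 0 ≤ x) : x ^ ((3 : ℝ) / 2) = √x ^ 3 := by
  rw [Real.sqrt_eq_rpow, ← Real.rpow_natCast, ← Real.rpow_mul hx]
  norm_num

theorem tsallis_stability_coord {η x y ℓ : ℝ} (hη : 0 < η) (hx : 0 ≤ x) (hy : 0 < y)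
    (hℓ : -(1 / 2) ≤ η * √y * ℓ) :
    (y - x) * ℓ - (√x - √y) ^ 2 / (η * √y) ≤ 2 * η * y ^ ((3 : ℝ) / 2) * ℓ ^ 2 := by
  have key := sq_sub_sq_mul_sub_sub_sq_le (√y) (√x) _ hℓ
  rw [Real.sq_sqrt hx, Real.sq_sqrt hy.le] at key
  have hlhs : (y - x) * ℓ - (√x - √y) ^ 2 / (η * √y)
      = ((y - x) * (η * √y * ℓ) - (√x - √y) ^ 2) / (η * √y) := by
    field_simp
  have hrhs : 2 * η * y ^ ((3 : ℝ) / 2) * ℓ ^ 2 = 2 * y * (η * √y * ℓ) ^ 2 / (η * √y) := by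
    rw [rpow_three_halves_eq_sqrt_pow_three hy.le]
    field_simp
    rw [Real.sq_sqrt hy.le]
    ring
  rw [hlhs, hrhs]
  gcongr

theorem neg_sqrt_bregman_eq {x y : ℝ} (hx : 0 ≤ x) (hy : 0 < y) :
    (x - y) / (2 * √y) - (√x - √y) = (√x - √y) ^ 2 / (2 * √y) := by
  have hs : 0 < √y := Real.sqrt_pos.mpr hy
  rw [← Real.sq_sqrt hx, ← Real.sq_sqrt hy.le]
  simp only [Real.sqrt_sq (Real.sqrt_nonneg _)]
  field_simp
  ring

theorem fderiv_const_mul_sum_sqrt {ι : Type*} [Fintype ι] (c : ℝ) {x : ι → ℝ}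
    (hx : ∀ i, x i ≠ 0) (v : ι → ℝ) :
    fderiv ℝ (fun p : ι → ℝ => c * ∑ i, √(p i)) x v = c * ∑ i, v i / (2 * √(x i)) := by
  have hsum : HasFDerivAt (fun p : ι → ℝ => ∑ i, √(p i))
      (∑ i, (1 / (2 * √(x i))) • (ContinuousLinearMap.proj i : (ι → ℝ) →L[ℝ] ℝ)) x :=
    HasFDerivAt.fun_sum fun i _ => by
      exact (Real.hasDerivAt_sqrt (hx i)).comp_hasFDerivAt x (hasFDerivAt_apply i x)
  rw [(hsum.const_mul c).fderiv]
  simp [div_eq_inv_mul]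

theorem tsallis_entropy_stability_general
    {𝒜 : Type*} [Fintype 𝒜]
    (η : ℝ) (hη : 0 < η)
    (ψ : (𝒜 → ℝ) → ℝ)
    (hψ : ψ = fun p : 𝒜 → ℝ => -(2 / η) * ∑ a, Real.sqrt (p a))
    (pt : 𝒜 → ℝ) (hpt_pos : ∀ a, 0 < pt a)
    (ℓ : 𝒜 → ℝ) (hℓ : ∀ a, η * Real.sqrt (pt a) * ℓ a ≥ -(1 / 2)) :
    ∀ p : 𝒜 → ℝ, (∀ a, 0 ≤ p a) → ∑ a, p a = 1 →
      (∑ a, (pt a - p a) * ℓ a) - (ψ p - ψ pt - fderiv ℝ ψ pt (p - pt))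
        ≤ 2 * η * ∑ a, pt a ^ ((3 : ℝ) / 2) * ℓ a ^ 2 := by
  subst hψ
  intro p hp _
  rw [fderiv_const_mul_sum_sqrt _ (fun a => (hpt_pos a).ne')]
  calc _ = ∑ a, ((pt a - p a) * ℓ a - (√(p a) - √(pt a)) ^ 2 / (η * √(pt a))) := by
        simp only [Pi.sub_apply, mul_sum, ← sum_sub_distrib]
        refine sum_congr rfl fun a _ => ?_
        linear_combination (-(2 / η)) * neg_sqrt_bregman_eq (hp a) (hpt_pos a)
    _ ≤ ∑ a, 2 * η * pt a ^ ((3 : ℝ) / 2) * ℓ a ^ 2 :=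
        sum_le_sum fun a _ => tsallis_stability_coord hη (hp a) (hpt_pos a) (hℓ a)
    _ = _ := by simp only [mul_sum, mul_assoc]

/-- **Stability under the Tsallis entropy regularizer.**
Let `ψ p = -(2/η) ∑ a, √(p a)` with `η > 0`, let `pt` be a point of the probability
simplex with strictly positive coordinates, and let `ℓ` satisfy
`η √(pt a) ℓ a ≥ -1/2` for every `a`.  Then for every `p` in the probability simplex,
`⟨pt - p, ℓ⟩ - D_ψ(p, pt) ≤ 2 η ∑ a, (pt a)^{3/2} (ℓ a)²`, where
`D_ψ(p, pt) = ψ p - ψ pt - ⟨∇ψ(pt), p - pt⟩`. -/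
theorem tsallis_entropy_stability
    {𝒜 : Type*} [Fintype 𝒜]
    (η : ℝ) (hη : 0 < η)
    (ψ : (𝒜 → ℝ) → ℝ)
    (hψ : ψ = fun p : 𝒜 → ℝ => -(2 / η) * ∑ a, Real.sqrt (p a))
    (pt : 𝒜 → ℝ) (hpt_pos : ∀ a, 0 < pt a) (hpt_sum : ∑ a, pt a = 1)
    (ℓ : 𝒜 → ℝ) (hℓ : ∀ a, η * Real.sqrt (pt a) * ℓ a ≥ -(1 / 2)) :
    ∀ p : 𝒜 → ℝ, (∀ a, 0 ≤ p a) → ∑ a, p a = 1 →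
      (∑ a, (pt a - p a) * ℓ a) - (ψ p - ψ pt - fderiv ℝ ψ pt (p - pt))
        ≤ 2 * η * ∑ a, pt a ^ ((3 : ℝ) / 2) * ℓ a ^ 2 :=
  tsallis_entropy_stability_general η hη ψ hψ pt hpt_pos ℓ hℓ
end

section
/- Let 𝒜 be a finite set, let η : 𝒜 → ℝ_{>0}, and let ψ(p) = Σ_{a∈𝒜} (1/η(a)) p(a) ln p(a) (the negative Shannon entropy regularizer with coordinate-wise learning rates). Let p_t ∈ Δ(𝒜) with p_t(a) > 0 for every a, and let ℓ ∈ ℝ^𝒜 satisfy η(a) ℓ(a) ≥ −1 for every a. Then max_{p ∈ Δ(𝒜)} { ⟨p_t − p, ℓ⟩ − D_ψ(p, p_t) } ≤ Σ_{a∈𝒜} η(a) p_t(a) ℓ(a)². -/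
/-!
Everything splits over coordinates. With `z = η a * ℓ a`, the Fenchel–Young inequality for
`x ↦ x log x` at the dual point `log (pt a) - z` bounds the Bregman term below, which leaves
`pt a * (exp (-z) - 1 + z) ≤ pt a * z ^ 2`; this is `exp w ≤ 1 + w + w ^ 2` for `w = -z ≤ 1`.
-/

open Finset Real

theorem exp_le_one_add_add_sq {w : ℝ} (hw : w ≤ 1) : exp w ≤ 1 + w + w ^ 2 := by
  rcases le_or_gt (-1) w with hw' | hw'
  · linarith [(abs_le.1 (abs_exp_sub_one_sub_id_le (abs_le.2 ⟨hw', hw⟩))).2]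
  · nlinarith [exp_le_one_iff.2 (by linarith : w ≤ 0)]

/-- Fenchel–Young for `x ↦ x log x`, whose convex conjugate is `c ↦ exp (c - 1)`. -/
theorem add_one_mul_sub_exp_le_mul_log {x : ℝ} (hx : 0 ≤ x) (c : ℝ) :
    (c + 1) * x - exp c ≤ x * log x := by
  rcases hx.eq_or_lt with rfl | hx
  · simp [(exp_pos c).le]
  · have hexp : exp c = x * exp (c - log x) := by
      rw [exp_sub, exp_log hx, mul_div_cancel₀ _ hx.ne']
    linarith [mul_le_mul_of_nonneg_left (add_one_le_exp (c - log x)) hx.le]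

noncomputable def mulLogBregman (x y : ℝ) : ℝ :=
  x * log x - y * log y - (log y + 1) * (x - y)

theorem sub_mul_sub_mulLogBregman_le {x y z : ℝ} (hx : 0 ≤ x) (hy : 0 < y) (hz : -1 ≤ z) :
    (y - x) * z - mulLogBregman x y ≤ y * z ^ 2 := by
  have hFY := add_one_mul_sub_exp_le_mul_log hx (log y - z)
  rw [sub_eq_add_neg (log y), exp_add, exp_log hy] at hFY
  have hexp := mul_le_mul_of_nonneg_left (exp_le_one_add_add_sq (w := -z) (by linarith)) hy.le
  unfold mulLogBregman
  linarith

theorem sub_mul_sub_inv_mul_mulLogBregman_le {η ℓ x y : ℝ} (hη : 0 < η) (hx : 0 ≤ x)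
    (hy : 0 < y) (hηℓ : -1 ≤ η * ℓ) :
    (y - x) * ℓ - η⁻¹ * mulLogBregman x y ≤ η * y * ℓ ^ 2 := by
  have h := sub_mul_sub_mulLogBregman_le hx hy hηℓ
  calc (y - x) * ℓ - η⁻¹ * mulLogBregman x y
      = η⁻¹ * ((y - x) * (η * ℓ) - mulLogBregman x y) := by field_simp
    _ ≤ η⁻¹ * (y * (η * ℓ) ^ 2) := by gcongr
    _ = η * y * ℓ ^ 2 := by field_simp

theorem hasFDerivAt_sum_mul_mul_log {ι : Type*} [Fintype ι] (w q : ι → ℝ)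
    (hq : ∀ a, q a ≠ 0) :
    HasFDerivAt (fun p : ι → ℝ => ∑ a, w a * (p a * log (p a)))
      (∑ a, (w a * (log (q a) + 1)) •
        ContinuousLinearMap.proj (R := ℝ) (φ := fun _ : ι => ℝ) a) q := by
  refine HasFDerivAt.fun_sum fun a _ => ?_
  have := ((hasDerivAt_mul_log (hq a)).comp_hasFDerivAt q
    (ContinuousLinearMap.proj (R := ℝ) (φ := fun _ : ι => ℝ) a).hasFDerivAt).const_mul (w a)
  simpa [smul_smul, Function.comp_def] using this

theorem fderiv_sum_mul_mul_log_apply {ι : Type*} [Fintype ι] (w q : ι → ℝ)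
    (hq : ∀ a, q a ≠ 0) (v : ι → ℝ) :
    fderiv ℝ (fun p : ι → ℝ => ∑ a, w a * (p a * log (p a))) q v
      = ∑ a, w a * (log (q a) + 1) * v a := by
  simp [(hasFDerivAt_sum_mul_mul_log w q hq).fderiv]

theorem shannon_entropy_stability_general
    {𝒜 : Type*} [Fintype 𝒜]
    (η : 𝒜 → ℝ) (hη : ∀ a, 0 < η a)
    (ψ : (𝒜 → ℝ) → ℝ)
    (hψ : ψ = fun p : 𝒜 → ℝ => ∑ a, (1 / η a) * (p a * Real.log (p a)))
    (pt : 𝒜 → ℝ) (hpt_pos : ∀ a, 0 < pt a)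
    (ℓ : 𝒜 → ℝ) (hℓ : ∀ a, η a * ℓ a ≥ -1) :
    ∀ p : 𝒜 → ℝ, (∀ a, 0 ≤ p a) → ∑ a, p a = 1 →
      (∑ a, (pt a - p a) * ℓ a) - (ψ p - ψ pt - fderiv ℝ ψ pt (p - pt))
        ≤ ∑ a, η a * pt a * ℓ a ^ 2 := by
  intro p hp _
  have hD : ψ p - ψ pt - fderiv ℝ ψ pt (p - pt)
      = ∑ a, (η a)⁻¹ * mulLogBregman (p a) (pt a) := by
    subst hψ
    rw [fderiv_sum_mul_mul_log_apply _ _ fun a => (hpt_pos a).ne', ← sum_sub_distrib,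
      ← sum_sub_distrib]
    simp only [mulLogBregman, Pi.sub_apply]
    congr! 1 with a
    ring
  rw [hD, ← sum_sub_distrib]
  exact sum_le_sum fun a _ =>
    sub_mul_sub_inv_mul_mulLogBregman_le (hη a) (hp a) (hpt_pos a) (hℓ a)

/-- **Stability under the Shannon entropy regularizer.**
Let `ψ p = ∑ a, (1 / η a) * (p a * log (p a))` with coordinate-wise learning rates
`η a > 0`, let `pt` be a point of the probability simplex with strictly positive
coordinates, and let `ℓ` satisfy `η a * ℓ a ≥ -1` for every `a`.  Then for every `p`
in the probability simplex,
`⟨pt - p, ℓ⟩ - D_ψ(p, pt) ≤ ∑ a, η a * pt a * (ℓ a)²`, where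
`D_ψ(p, pt) = ψ p - ψ pt - ⟨∇ψ(pt), p - pt⟩`. -/
theorem shannon_entropy_stability
    {𝒜 : Type*} [Fintype 𝒜]
    (η : 𝒜 → ℝ) (hη : ∀ a, 0 < η a)
    (ψ : (𝒜 → ℝ) → ℝ)
    (hψ : ψ = fun p : 𝒜 → ℝ => ∑ a, (1 / η a) * (p a * Real.log (p a)))
    (pt : 𝒜 → ℝ) (hpt_pos : ∀ a, 0 < pt a) (hpt_sum : ∑ a, pt a = 1)
    (ℓ : 𝒜 → ℝ) (hℓ : ∀ a, η a * ℓ a ≥ -1) :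
    ∀ p : 𝒜 → ℝ, (∀ a, 0 ≤ p a) → ∑ a, p a = 1 →
      (∑ a, (pt a - p a) * ℓ a) - (ψ p - ψ pt - fderiv ℝ ψ pt (p - pt))
        ≤ ∑ a, η a * pt a * ℓ a ^ 2 :=
  shannon_entropy_stability_general η hη ψ hψ pt hpt_pos ℓ hℓ
end

section
/- Let 𝒜 be a finite set, let η : 𝒜 → ℝ_{>0}, and let ψ(p) = Σ_{a∈𝒜} (1/η(a)) ln(1/p(a)) (the log barrier regularizer with coordinate-wise learning rates). Let p_t ∈ Δ(𝒜) with p_t(a) > 0 for every a, and let ℓ ∈ ℝ^𝒜 satisfy η(a) p_t(a) ℓ(a) ≥ −1/2 for every a. Then max_{p ∈ Δ(𝒜)} { ⟨p_t − p, ℓ⟩ − D_ψ(p, p_t) } ≤ Σ_{a∈𝒜} η(a) p_t(a)² ℓ(a)². -/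
/-!
Coordinate `a` of the left-hand side is `(1 / η a) * (c * (1 - x) - (x - 1 - log x))` with
`c = η a * pt a * ℓ a` and `x = p a / pt a`, while the right-hand side is `(1 / η a) * c ^ 2`.
The supremum over `x > 0` is attained at `x = 1 / (1 + c)` and equals `c - log (1 + c)`,
which is at most `c ^ 2` as soon as `c ≥ -1/2`.
-/

open Finset Real

lemma Real.sub_sq_le_log_one_add {c : ℝ} (hc : -(1 / 2) ≤ c) : c - c ^ 2 ≤ log (1 + c) := by
  have h1c : 0 < 1 + c := by linarith
  rcases le_total 0 c with hc0 | hc0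
  · have h := one_sub_inv_le_log_of_pos h1c
    have : c - c ^ 2 ≤ 1 - (1 + c)⁻¹ := by
      rw [← sub_nonneg]
      field_simp
      nlinarith [mul_nonneg hc0 (sq_nonneg c)]
    linarith
  · have h : sinh (log (1 + c)) ≤ log (1 + c) :=
      sinh_le_self_iff.2 (log_nonpos h1c.le (by linarith))
    rw [sinh_log h1c] at h
    have : c - c ^ 2 ≤ (1 + c - (1 + c)⁻¹) / 2 := by
      rw [← sub_nonneg]
      field_simp
      nlinarith [mul_nonneg (sq_nonneg c) (by linarith : 0 ≤ 1 + 2 * c)]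
    linarith

lemma mul_one_sub_le_sq_add_sub_one_sub_log {c x : ℝ} (hc : -(1 / 2) ≤ c) (hx : 0 < x) :
    c * (1 - x) ≤ c ^ 2 + (x - 1 - log x) := by
  have h1c : 0 < 1 + c := by linarith
  have hlog : log x + log (1 + c) ≤ x * (1 + c) - 1 := by
    rw [← log_mul hx.ne' h1c.ne']
    exact log_le_sub_one_of_pos (mul_pos hx h1c)
  linarith [sub_sq_le_log_one_add hc]

lemma fderiv_logBarrier_apply {𝒜 : Type*} [Fintype 𝒜] (w q : 𝒜 → ℝ) (hq : ∀ a, q a ≠ 0)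
    (v : 𝒜 → ℝ) :
    fderiv ℝ (fun p : 𝒜 → ℝ => ∑ a, w a * log (1 / p a)) q v = -∑ a, w a * v a / q a := by
  have hψ : HasFDerivAt (fun p : 𝒜 → ℝ => ∑ a, w a * log (1 / p a))
      (∑ a, (-(w a / q a)) • ContinuousLinearMap.proj (R := ℝ) (φ := fun _ : 𝒜 => ℝ) a) q := by
    simp only [one_div, log_inv, mul_neg]
    refine HasFDerivAt.fun_sum fun a _ => ?_
    have := ((hasFDerivAt_apply a q).log (hq a)).const_mul (w a)
    convert this.fun_neg using 1
    rw [smul_smul, ← neg_smul, div_eq_mul_inv]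
  rw [hψ.fderiv]
  simp only [_root_.sum_apply, _root_.smul_apply,
    ContinuousLinearMap.proj_apply, smul_eq_mul, ← sum_neg_distrib]
  exact sum_congr rfl fun a _ => by ring

lemma logBarrier_stability_coord {η y ℓ x : ℝ} (hη : 0 < η) (hy : 0 < y)
    (hℓ : -(1 / 2) ≤ η * y * ℓ) (hx : 0 < x) :
    (y - x) * ℓ - ((1 / η) * log (1 / x) - (1 / η) * log (1 / y) + (1 / η) * (x - y) / y)
      ≤ η * y ^ 2 * ℓ ^ 2 := by
  have key := mul_one_sub_le_sq_add_sub_one_sub_log hℓ (div_pos hx hy)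
  rw [log_div hx.ne' hy.ne'] at key
  have hlhs : (y - x) * ℓ - ((1 / η) * log (1 / x) - (1 / η) * log (1 / y) + (1 / η) * (x - y) / y)
      = (1 / η) * (η * y * ℓ * (1 - x / y) - (x / y - 1 - (log x - log y))) := by
    simp only [one_div, log_inv]
    field_simp
    ring
  have hrhs : η * y ^ 2 * ℓ ^ 2 = (1 / η) * (η * y * ℓ) ^ 2 := by
    field_simp
  rw [hlhs, hrhs]
  exact mul_le_mul_of_nonneg_left (by linarith) (by positivity)

theorem log_barrier_stability_general
    {𝒜 : Type*} [Fintype 𝒜]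
    (η : 𝒜 → ℝ) (hη : ∀ a, 0 < η a)
    (ψ : (𝒜 → ℝ) → ℝ)
    (hψ : ψ = fun p : 𝒜 → ℝ => ∑ a, (1 / η a) * Real.log (1 / p a))
    (pt : 𝒜 → ℝ) (hpt_pos : ∀ a, 0 < pt a)
    (ℓ : 𝒜 → ℝ) (hℓ : ∀ a, η a * pt a * ℓ a ≥ -(1 / 2)) :
    ∀ p : 𝒜 → ℝ, (∀ a, 0 < p a) → ∑ a, p a = 1 →
      (∑ a, (pt a - p a) * ℓ a) - (ψ p - ψ pt - fderiv ℝ ψ pt (p - pt))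
        ≤ ∑ a, η a * pt a ^ 2 * ℓ a ^ 2 := by
  intro p hp_pos _
  subst hψ
  rw [fderiv_logBarrier_apply _ _ fun a => (hpt_pos a).ne', sub_neg_eq_add, ← sum_sub_distrib,
    ← sum_add_distrib, ← sum_sub_distrib]
  exact sum_le_sum fun a _ =>
    logBarrier_stability_coord (hη a) (hpt_pos a) (hℓ a) (hp_pos a)

/-- **Stability under the log barrier regularizer.**
Let `ψ p = ∑ a, (1 / η a) * log (1 / p a)` with coordinate-wise learning rates
`η a > 0`, let `pt` be a point of the probability simplex with strictly positive
coordinates, and let `ℓ` satisfy `η a * pt a * ℓ a ≥ -1/2` for every `a`.  Then for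
every `p` in the probability simplex (with strictly positive coordinates, where `ψ`
is defined),
`⟨pt - p, ℓ⟩ - D_ψ(p, pt) ≤ ∑ a, η a * (pt a)² * (ℓ a)²`, where
`D_ψ(p, pt) = ψ p - ψ pt - ⟨∇ψ(pt), p - pt⟩`. -/
theorem log_barrier_stability
    {𝒜 : Type*} [Fintype 𝒜]
    (η : 𝒜 → ℝ) (hη : ∀ a, 0 < η a)
    (ψ : (𝒜 → ℝ) → ℝ)
    (hψ : ψ = fun p : 𝒜 → ℝ => ∑ a, (1 / η a) * Real.log (1 / p a))
    (pt : 𝒜 → ℝ) (hpt_pos : ∀ a, 0 < pt a) (hpt_sum : ∑ a, pt a = 1)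
    (ℓ : 𝒜 → ℝ) (hℓ : ∀ a, η a * pt a * ℓ a ≥ -(1 / 2)) :
    ∀ p : 𝒜 → ℝ, (∀ a, 0 < p a) → ∑ a, p a = 1 →
      (∑ a, (pt a - p a) * ℓ a) - (ψ p - ψ pt - fderiv ℝ ψ pt (p - pt))
        ≤ ∑ a, η a * pt a ^ 2 * ℓ a ^ 2 :=
  log_barrier_stability_general η hη ψ hψ pt hpt_pos ℓ hℓ
end

section
/- Let 𝒜 be a finite set, let η : 𝒜 → ℝ_{>0}, and let ψ(q) = Σ_{a∈𝒜} (1/η(a)) ln(1/q(a)) on the open positive orthant ℝ^𝒜_{>0}. Let p_t ∈ ℝ^𝒜_{>0} and let ℓ ∈ ℝ^𝒜 satisfy η(a) p_t(a) ℓ(a) ≥ −1/2 for every a. Define q*(a) = (1/p_t(a) + η(a) ℓ(a))^{−1} for each a (which is well defined and strictly positive). Then sup_{q ∈ ℝ^𝒜_{>0}} { ⟨p_t − q, ℓ⟩ − D_ψ(q, p_t) } = D_ψ(p_t, q*), and moreover D_ψ(p_t, q*) = Σ_{a∈𝒜} (1/η(a)) ( η(a) p_t(a) ℓ(a) − ln(1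 + η(a) p_t(a) ℓ(a)) ). -/
/-!
Writing `u a = 1 + η a * pt a * ℓ a`, everything splits over coordinates, and the Bregman
divergence of the log barrier is the Itakura–Saito divergence
`D p q = ∑ a, (1 / η a) * φ (p a / q a)` with `φ t = t - 1 - log t` (`itakuraSaitoFun`),
`φ ≥ 0`, `φ 1 = 0`.
Substituting `ℓ a = (u a - 1) / (η a * pt a)`, the stability term at `q` becomes
`∑ a, (1 / η a) * (φ (u a) - φ (q a * u a / pt a))`. It is therefore at most
`∑ a, (1 / η a) * φ (u a) = D pt q*` (as `pt a / q* a = u a`), with equality exactly at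
`q a = pt a / u a = q* a`.
-/

open Finset Real

noncomputable def itakuraSaitoFun (t : ℝ) : ℝ := t - 1 - log t

lemma itakuraSaitoFun_nonneg {t : ℝ} (ht : 0 < t) : 0 ≤ itakuraSaitoFun t := by
  unfold itakuraSaitoFun
  linarith [log_le_sub_one_of_pos ht]

@[simp]
lemma itakuraSaitoFun_one : itakuraSaitoFun 1 = 0 := by
  simp [itakuraSaitoFun]

lemma stability_term_eq_itakuraSaitoFun_sub {η p ℓ x : ℝ} (hη : η ≠ 0) (hp : p ≠ 0)
    (hx : x ≠ 0) (hu : 1 + η * p * ℓ ≠ 0) :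
    (p - x) * ℓ - (1 / η) * itakuraSaitoFun (x / p)
      = (1 / η) * (itakuraSaitoFun (1 + η * p * ℓ)
        - itakuraSaitoFun (x * (1 + η * p * ℓ) / p)) := by
  unfold itakuraSaitoFun
  rw [log_div hx hp, log_div (mul_ne_zero hx hu) hp, log_mul hx hu]
  field_simp
  ring

lemma inv_one_div_add_mul {p η ℓ : ℝ} (hp : p ≠ 0) :
    (1 / p + η * ℓ)⁻¹ = p / (1 + η * p * ℓ) := by
  rw [← inv_div]
  field_simp

noncomputable def bregmanDiv {E : Type*} [NormedAddCommGroup E] [NormedSpace ℝ E] (ψ : E → ℝ)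
    (p q : E) : ℝ :=
  ψ p - ψ q - fderiv ℝ ψ q (p - q)

section LogBarrier

variable {𝒜 : Type*} [Fintype 𝒜] (η : 𝒜 → ℝ)

noncomputable def logBarrier (q : 𝒜 → ℝ) : ℝ := ∑ a, (1 / η a) * log (1 / q a)

lemma hasFDerivAt_logBarrier {q : 𝒜 → ℝ} (hq : ∀ a, q a ≠ 0) :
    HasFDerivAt (logBarrier η)
      (∑ a, (-(1 / (η a * q a))) • (ContinuousLinearMap.proj a : (𝒜 → ℝ) →L[ℝ] ℝ))
      q := by
  refine HasFDerivAt.fun_sum fun a _ => ?_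
  have hlog := (((hasFDerivAt_apply a q).log (hq a)).const_mul (1 / η a)).fun_neg
  have hfun : (fun q : 𝒜 → ℝ => (1 / η a) * log (1 / q a))
      = fun q => -((1 / η a) * log (q a)) := by
    funext q
    rw [one_div (q a), log_inv]
    ring
  rw [hfun]
  convert hlog using 1
  rw [smul_smul, ← neg_smul]
  congr 1
  field_simp

lemma fderiv_logBarrier_apply_s4 {q : 𝒜 → ℝ} (hq : ∀ a, q a ≠ 0) (v : 𝒜 → ℝ) :
    fderiv ℝ (logBarrier η) q v = -∑ a, v a / (η a * q a) := by
  rw [(hasFDerivAt_logBarrier η hq).fderiv, _root_.sum_apply, ← sum_neg_distrib]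
  refine sum_congr rfl fun a _ => ?_
  simp only [_root_.smul_apply, ContinuousLinearMap.proj_apply, smul_eq_mul]
  ring

lemma bregmanDiv_logBarrier {p q : 𝒜 → ℝ} (hp : ∀ a, p a ≠ 0) (hq : ∀ a, q a ≠ 0) :
    bregmanDiv (logBarrier η) p q = ∑ a, (1 / η a) * itakuraSaitoFun (p a / q a) := by
  rw [bregmanDiv, fderiv_logBarrier_apply_s4 η hq, logBarrier, logBarrier, ← sum_sub_distrib,
    sub_neg_eq_add, ← sum_add_distrib]
  refine sum_congr rfl fun a _ => ?_
  rw [itakuraSaitoFun, one_div (p a), one_div (q a), log_inv, log_inv,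
    log_div (hp a) (hq a), Pi.sub_apply]
  have hqa := hq a
  field_simp
  ring

lemma stability_term_logBarrier {p q ℓ : 𝒜 → ℝ} (hη : ∀ a, η a ≠ 0) (hp : ∀ a, p a ≠ 0)
    (hq : ∀ a, q a ≠ 0) (hu : ∀ a, 1 + η a * p a * ℓ a ≠ 0) :
    (∑ a, (p a - q a) * ℓ a) - bregmanDiv (logBarrier η) q p
      = ∑ a, (1 / η a) * itakuraSaitoFun (1 + η a * p a * ℓ a)
        - ∑ a, (1 / η a) * itakuraSaitoFun (q a * (1 + η a * p a * ℓ a) / p a) := by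
  rw [bregmanDiv_logBarrier η hq hp, ← sum_sub_distrib, ← sum_sub_distrib]
  refine sum_congr rfl fun a _ => ?_
  rw [stability_term_eq_itakuraSaitoFun_sub (hη a) (hp a) (hq a) (hu a), mul_sub]

end LogBarrier

/-- **Characterization of the log-barrier stability maximizer over the positive orthant.**
Let `ψ q = ∑ a, (1 / η a) * log (1 / q a)` on the open positive orthant,
`pt` strictly positive, and `ℓ` with `η a * pt a * ℓ a ≥ -1/2` for every `a`.
With `q* a = (1 / pt a + η a * ℓ a)⁻¹` (well defined and strictly positive),
the supremum of `q ↦ ⟨pt - q, ℓ⟩ - D_ψ(q, pt)` over strictly positive `q` equals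
`D_ψ(pt, q*)`, which moreover equals
`∑ a, (1 / η a) * (η a * pt a * ℓ a - log (1 + η a * pt a * ℓ a))`.
Here `D_ψ(p, q) = ψ p - ψ q - ⟨∇ψ(q), p - q⟩`. -/
theorem log_barrier_sup_characterization
    {𝒜 : Type*} [Fintype 𝒜]
    (η : 𝒜 → ℝ) (hη : ∀ a, 0 < η a)
    (ψ : (𝒜 → ℝ) → ℝ)
    (hψ : ψ = fun q : 𝒜 → ℝ => ∑ a, (1 / η a) * Real.log (1 / q a))
    (pt : 𝒜 → ℝ) (hpt_pos : ∀ a, 0 < pt a)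
    (ℓ : 𝒜 → ℝ) (hℓ : ∀ a, η a * pt a * ℓ a ≥ -(1 / 2))
    (qstar : 𝒜 → ℝ) (hqstar : ∀ a, qstar a = (1 / pt a + η a * ℓ a)⁻¹)
    (D : (𝒜 → ℝ) → (𝒜 → ℝ) → ℝ)
    (hD : ∀ p q : 𝒜 → ℝ, D p q = ψ p - ψ q - fderiv ℝ ψ q (p - q)) :
    (∀ a, 0 < qstar a)
    ∧ IsLUB ((fun q => (∑ a, (pt a - q a) * ℓ a) - D q pt) '' {q : 𝒜 → ℝ | ∀ a, 0 < q a})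
        (D pt qstar)
    ∧ D pt qstar
        = ∑ a, (1 / η a) * (η a * pt a * ℓ a - Real.log (1 + η a * pt a * ℓ a)) := by
  obtain rfl : ψ = logBarrier η := hψ
  obtain rfl : D = bregmanDiv (logBarrier η) := funext₂ hD
  have hu : ∀ a, 0 < 1 + η a * pt a * ℓ a := fun a => by linarith [hℓ a]
  have hqstar_eq : ∀ a, qstar a = pt a / (1 + η a * pt a * ℓ a) := fun a => by
    rw [hqstar, inv_one_div_add_mul (hpt_pos a).ne']
  have hqstar_pos : ∀ a, 0 < qstar a := fun a => hqstar_eq a ▸ div_pos (hpt_pos a) (hu a)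
  have hval : bregmanDiv (logBarrier η) pt qstar
      = ∑ a, (1 / η a) * itakuraSaitoFun (1 + η a * pt a * ℓ a) := by
    rw [bregmanDiv_logBarrier η (fun a => (hpt_pos a).ne') (fun a => (hqstar_pos a).ne')]
    simp only [hqstar_eq, div_div_cancel₀ (hpt_pos _).ne']
  have hobj := fun (q : 𝒜 → ℝ) (hq : ∀ a, 0 < q a) =>
    stability_term_logBarrier η (fun a => (hη a).ne') (fun a => (hpt_pos a).ne')
      (fun a => (hq a).ne') (fun a => (hu a).ne')
  refine ⟨hqstar_pos, IsGreatest.isLUB ⟨⟨qstar, hqstar_pos, ?_⟩, ?_⟩, ?_⟩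
  · dsimp only
    rw [hobj qstar hqstar_pos, hval, sub_eq_self]
    refine sum_eq_zero fun a _ => ?_
    rw [hqstar_eq, div_mul_cancel₀ _ (hu a).ne', div_self (hpt_pos a).ne', itakuraSaitoFun_one,
      mul_zero]
  · rintro _ ⟨q, hq, rfl⟩
    dsimp only
    rw [hobj q hq, hval, sub_le_self_iff]
    exact sum_nonneg fun a _ => mul_nonneg (one_div_pos.2 (hη a)).le
      (itakuraSaitoFun_nonneg (div_pos (mul_pos (hq a) (hu a)) (hpt_pos a)))
  · rw [hval]
    refine sum_congr rfl fun a _ => ?_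
    rw [itakuraSaitoFun]
    ring
end

section
/- Let 𝒜 be a finite set with |𝒜| = A, let ℓ_1, …, ℓ_T ∈ ℝ^𝒜, and let η_0 ≥ η_1 ≥ ⋯ ≥ η_T > 0. For t = 0, …, T let ψ_t(p) = −(2/η_t) Σ_{a∈𝒜} √(p(a)), and for t = 1, …, T let p_t be a minimizer over Δ(𝒜) of p ↦ ⟨p, Σ_{τ=1}^{t−1} ℓ_τ⟩ + ψ_t(p); assume p_t(a) > 0 for all t, a. Suppose x_1, …, x_T ∈ ℝ satisfy η_t √(p_t(a)) (ℓ_t(a) + x_t) ≥ −1/2 for all t and a. Then for every u ∈ Δ(𝒜), Σ_{t=1}^{T} ⟨p_t − u, ℓ_t⟩ ≤ 2√A/η_0 + 2 Σ_{t=1}^{T} (1/η_t − 1/η_{t−1}) ξ_t + 2 Σ_{t=1}^{T} η_t Σ_{a∈𝒜} p_t(a)^{3/2} (ℓ_t(a) + x_t)², where ξ_t = Σ_{a∈𝒜} √(p_t(a)) (1 − p_t(a)). -/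
open Finset

lemma sqrt_id {P Q : ℝ} (hp : 0 < P) (hq : 0 ≤ Q) :
    -2 * Real.sqrt Q = -2 * Real.sqrt P - (Q - P) / Real.sqrt P
      + (Real.sqrt Q - Real.sqrt P)^2 / Real.sqrt P := by
  have hP : 0 < Real.sqrt P := Real.sqrt_pos.mpr hp
  have h1 : Real.sqrt Q ^ 2 = Q := Real.sq_sqrt hq
  have h2 : Real.sqrt P ^ 2 = P := Real.sq_sqrt hp.le
  field_simp
  nlinarith [h1, h2]

-- scalar stability inequality
lemma stab_scalar {η r s g : ℝ} (hη : 0 < η) (hr : 0 < r) (hs : 0 ≤ s)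
    (hg : -(1/2) ≤ η * r * g) :
    (r^2 - s^2) * g - (s - r)^2 / (η * r) ≤ 2 * η * r^3 * g^2 := by
  have hηr : 0 < η * r := mul_pos hη hr
  rw [sub_le_iff_le_add, ← sub_le_iff_le_add']
  rw [le_div_iff₀ hηr]
  nlinarith [sq_nonneg ((1 + η*r*g) * (s - r) + η*r*g*r), sq_nonneg (s - r), sq_nonneg (η*r*g*r), mul_pos hηr hηr]

-- (√y - √p)² ≤ (y - p)²/p
lemma sqrt_diff_sq_le {P y : ℝ} (hp : 0 < P) (hy : 0 ≤ y) :
    (Real.sqrt y - Real.sqrt P)^2 ≤ (y - P)^2 / P := by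
  rw [le_div_iff₀ hp]
  have h1 : Real.sqrt y ^ 2 = y := Real.sq_sqrt hy
  have h2 : Real.sqrt P ^ 2 = P := Real.sq_sqrt hp.le
  nlinarith [sq_nonneg (Real.sqrt y - Real.sqrt P), Real.sqrt_nonneg y, Real.sqrt_nonneg P,
    mul_nonneg (Real.sqrt_nonneg y) (Real.sqrt_nonneg P), sq_nonneg (Real.sqrt y + Real.sqrt P)]
lemma first_order {𝒜 : Type*} [Fintype 𝒜] {η : ℝ} (hη : 0 < η) (L : 𝒜 → ℝ)
    {p : 𝒜 → ℝ} (hp : ∀ a, 0 < p a)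
    (hmin : ∀ q : 𝒜 → ℝ, (∀ a, 0 ≤ q a) → ∑ a, q a = 1 →
      (∑ a, p a * L a) - (2/η) * ∑ a, Real.sqrt (p a)
        ≤ (∑ a, q a * L a) - (2/η) * ∑ a, Real.sqrt (q a))
    {q : 𝒜 → ℝ} (hq : ∀ a, 0 ≤ q a) (hqs : ∑ a, q a = 1) (hps : ∑ a, p a = 1) :
    0 ≤ ∑ a, (L a - 1/(η * Real.sqrt (p a))) * (q a - p a) := by
  set v := ∑ a, (L a - 1/(η * Real.sqrt (p a))) * (q a - p a) with hv
  set sC := ∑ a, (q a - p a)^2 / (p a * Real.sqrt (p a)) with hsC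
  set C := (1/η) * sC with hC
  have hsC0 : 0 ≤ sC := by
    apply Finset.sum_nonneg
    intro a _
    have := hp a
    positivity
  have hC0 : 0 ≤ C := by
    apply mul_nonneg (by positivity) hsC0
  have key : ∀ lam : ℝ, 0 < lam → lam ≤ 1 → -(C * lam) ≤ v := by
    intro lam hl hl1
    set ql : 𝒜 → ℝ := fun a => p a + lam * (q a - p a) with hql
    have hql_nonneg : ∀ a, 0 ≤ ql a := by
      intro a
      have h1 := (hp a).le
      have h2 := hq a
      simp only [hql]
      nlinarith
    have hql_sum : ∑ a, ql a = 1 := by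
      simp only [hql]
      rw [Finset.sum_add_distrib, ← Finset.mul_sum, Finset.sum_sub_distrib, hqs, hps]
      ring
    have hm := hmin ql hql_nonneg hql_sum
    have hid : ∀ a : 𝒜, Real.sqrt (ql a) - Real.sqrt (p a)
        = lam * (q a - p a) / (2 * Real.sqrt (p a))
          - (Real.sqrt (ql a) - Real.sqrt (p a))^2 / (2 * Real.sqrt (p a)) := by
      intro a
      have h := sqrt_id (hp a) (hql_nonneg a)
      have hP : 0 < Real.sqrt (p a) := Real.sqrt_pos.mpr (hp a)
      have hqlp : ql a - p a = lam * (q a - p a) := by simp only [hql]; ring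
      rw [hqlp] at h
      field_simp at h ⊢
      linarith
    have hD : ∀ a : 𝒜, (Real.sqrt (ql a) - Real.sqrt (p a))^2 / Real.sqrt (p a)
        ≤ lam^2 * ((q a - p a)^2 / (p a * Real.sqrt (p a))) := by
      intro a
      have hP : 0 < Real.sqrt (p a) := Real.sqrt_pos.mpr (hp a)
      have hpa := hp a
      have h := sqrt_diff_sq_le (hp a) (hql_nonneg a)
      have hqlp : ql a - p a = lam * (q a - p a) := by simp only [hql]; ring
      rw [hqlp] at h
      rw [div_le_iff₀ hP]
      calc (Real.sqrt (ql a) - Real.sqrt (p a))^2 ≤ (lam * (q a - p a))^2 / p a := h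
        _ = (lam^2 * ((q a - p a)^2 / (p a * Real.sqrt (p a)))) * Real.sqrt (p a) := by
            field_simp [hP.ne']
    have e1 : ∑ a, ql a * L a = (∑ a, p a * L a) + lam * ∑ a, (q a - p a) * L a := by
      rw [Finset.mul_sum, ← Finset.sum_add_distrib]
      apply Finset.sum_congr rfl
      intro a _
      simp only [hql]; ring
    have e2 : ∑ a, Real.sqrt (ql a) = (∑ a, Real.sqrt (p a))
        + (lam/2) * (∑ a, (q a - p a) / Real.sqrt (p a))
        - (1/2) * ∑ a, (Real.sqrt (ql a) - Real.sqrt (p a))^2 / Real.sqrt (p a) := by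
      rw [Finset.mul_sum, Finset.mul_sum, ← Finset.sum_add_distrib, ← Finset.sum_sub_distrib]
      apply Finset.sum_congr rfl
      intro a _
      have h := hid a
      have hP : 0 < Real.sqrt (p a) := Real.sqrt_pos.mpr (hp a)
      field_simp at h ⊢
      linarith
    have e3 : ∑ a, (Real.sqrt (ql a) - Real.sqrt (p a))^2 / Real.sqrt (p a)
        ≤ lam^2 * sC := by
      rw [hsC, Finset.mul_sum]
      exact Finset.sum_le_sum fun a _ => hD a
    have e4 : v = (∑ a, (q a - p a) * L a)
        - (1/η) * ∑ a, (q a - p a) / Real.sqrt (p a) := by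
      rw [hv, Finset.mul_sum, ← Finset.sum_sub_distrib]
      apply Finset.sum_congr rfl
      intro a _
      have hP : 0 < Real.sqrt (p a) := Real.sqrt_pos.mpr (hp a)
      field_simp
    rw [e1, e2] at hm
    set s1 := ∑ a, (q a - p a) * L a
    set s2 := ∑ a, (q a - p a) / Real.sqrt (p a)
    set sD := ∑ a, (Real.sqrt (ql a) - Real.sqrt (p a))^2 / Real.sqrt (p a)
    have key2 : lam * v + (1/η) * sD
        = ((∑ a, p a * L a) + lam * s1
            - 2/η * ((∑ a, Real.sqrt (p a)) + (lam/2) * s2 - (1/2) * sD))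
          - ((∑ a, p a * L a) - 2/η * (∑ a, Real.sqrt (p a))) := by
      rw [e4]; ring
    have h8 : 0 ≤ lam * v + (1/η) * sD := by linarith
    have h9 : (1/η) * sD ≤ (1/η) * (lam^2 * sC) :=
      mul_le_mul_of_nonneg_left e3 (by positivity)
    have h10 : (-(C * lam)) * lam ≤ v * lam := by
      rw [hC]; nlinarith
    exact le_of_mul_le_mul_right h10 hl
  by_contra hneg
  push_neg at hneg
  have hl : 0 < min 1 (-v / (C + 1)) := by
    apply lt_min one_pos
    apply div_pos (by linarith) (by linarith)
  have h2 := key _ hl (min_le_left _ _)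
  have h3 : min 1 (-v / (C + 1)) ≤ -v / (C + 1) := min_le_right _ _
  have h4 : C * min 1 (-v / (C+1)) ≤ C * (-v / (C+1)) :=
    mul_le_mul_of_nonneg_left h3 hC0
  have h5 : C * (-v / (C+1)) < -v := by
    rw [mul_div_assoc']
    rw [div_lt_iff₀ (by linarith)]
    nlinarith
  linarith
lemma ftrl_step {𝒜 : Type*} [Fintype 𝒜] {η : ℝ} (hη : 0 < η) (L g : 𝒜 → ℝ)
    {p : 𝒜 → ℝ} (hp : ∀ a, 0 < p a) (hps : ∑ a, p a = 1)
    (hmin : ∀ q : 𝒜 → ℝ, (∀ a, 0 ≤ q a) → ∑ a, q a = 1 →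
      (∑ a, p a * L a) - (2/η) * ∑ a, Real.sqrt (p a)
        ≤ (∑ a, q a * L a) - (2/η) * ∑ a, Real.sqrt (q a))
    {q : 𝒜 → ℝ} (hq : ∀ a, 0 ≤ q a) (hqs : ∑ a, q a = 1)
    (hg : ∀ a, -(1/2) ≤ η * Real.sqrt (p a) * g a) :
    ∑ a, (p a - q a) * (L a + g a)
      ≤ (2/η) * (∑ a, Real.sqrt (p a)) - (2/η) * (∑ a, Real.sqrt (q a))
        + 2 * η * ∑ a, Real.sqrt (p a) ^ 3 * g a ^ 2 := by
  have hfo := first_order hη L hp hmin hq hqs hps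
  -- v = ∑ (q-p)L - ∑ (q-p)/(η√p) ≥ 0, i.e. ∑(p-q)L ≤ ∑(p-q)*(-1/(η√p))... 
  have h1 : ∑ a, (p a - q a) * L a ≤ ∑ a, (p a - q a) / (η * Real.sqrt (p a)) := by
    have : ∑ a, (L a - 1/(η * Real.sqrt (p a))) * (q a - p a)
        = (∑ a, (p a - q a) / (η * Real.sqrt (p a))) - ∑ a, (p a - q a) * L a := by
      rw [← Finset.sum_sub_distrib]
      apply Finset.sum_congr rfl
      intro a _
      have hP : 0 < Real.sqrt (p a) := Real.sqrt_pos.mpr (hp a)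
      field_simp
      ring
    linarith [hfo, this ▸ hfo]
  -- per-coordinate combination
  have h2 : ∀ a : 𝒜, (p a - q a) / (η * Real.sqrt (p a)) + (p a - q a) * g a
      ≤ (2 * Real.sqrt (p a) - 2 * Real.sqrt (q a)) / η
        + 2 * η * (Real.sqrt (p a) ^ 3 * g a ^ 2) := by
    intro a
    have hP : 0 < Real.sqrt (p a) := Real.sqrt_pos.mpr (hp a)
    have hQ : (0:ℝ) ≤ Real.sqrt (q a) := Real.sqrt_nonneg _
    have hid := sqrt_id (hp a) (hq a)
    have hstab := stab_scalar hη hP hQ (hg a)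
    have hps2 : Real.sqrt (p a) ^ 2 = p a := Real.sq_sqrt (hp a).le
    have hqs2 : Real.sqrt (q a) ^ 2 = q a := Real.sq_sqrt (hq a)
    -- stability: (p-q)g - (√q-√p)²/(η√p) ≤ 2η√p³g²
    rw [hps2, hqs2] at hstab
    -- identity: (p-q)/(√p) + (√q-√p)²/(√p) = 2√p - 2√q
    have hid2 : (p a - q a) / Real.sqrt (p a) + (Real.sqrt (q a) - Real.sqrt (p a))^2 / Real.sqrt (p a)
        = 2 * Real.sqrt (p a) - 2 * Real.sqrt (q a) := by
      field_simp at hid ⊢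
      linarith
    have e1 : (p a - q a) / (η * Real.sqrt (p a))
        = ((p a - q a) / Real.sqrt (p a)) / η := by
      rw [div_div, mul_comm]
    have e2 : (2 * Real.sqrt (p a) - 2 * Real.sqrt (q a)) / η
        = ((p a - q a) / Real.sqrt (p a)) / η + ((Real.sqrt (q a) - Real.sqrt (p a))^2 / Real.sqrt (p a)) / η := by
      rw [← hid2]; ring
    rw [e1, e2]
    have e3 : (Real.sqrt (q a) - Real.sqrt (p a))^2 / Real.sqrt (p a) / η
        = (Real.sqrt (q a) - Real.sqrt (p a))^2 / (η * Real.sqrt (p a)) := by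
      rw [div_div]; ring_nf
    rw [e3]
    linarith
  calc ∑ a, (p a - q a) * (L a + g a)
      = (∑ a, (p a - q a) * L a) + ∑ a, (p a - q a) * g a := by
        rw [← Finset.sum_add_distrib]; apply Finset.sum_congr rfl; intro a _; ring
    _ ≤ (∑ a, (p a - q a) / (η * Real.sqrt (p a))) + ∑ a, (p a - q a) * g a := by linarith
    _ = ∑ a, ((p a - q a) / (η * Real.sqrt (p a)) + (p a - q a) * g a) := by
        rw [Finset.sum_add_distrib]
    _ ≤ ∑ a, ((2 * Real.sqrt (p a) - 2 * Real.sqrt (q a)) / η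
          + 2 * η * (Real.sqrt (p a) ^ 3 * g a ^ 2)) := Finset.sum_le_sum fun a _ => h2 a
    _ = (2/η) * (∑ a, Real.sqrt (p a)) - (2/η) * (∑ a, Real.sqrt (q a))
        + 2 * η * ∑ a, Real.sqrt (p a) ^ 3 * g a ^ 2 := by
        rw [Finset.sum_add_distrib, Finset.mul_sum, Finset.mul_sum, Finset.mul_sum,
          ← Finset.sum_sub_distrib]
        congr 1
        apply Finset.sum_congr rfl
        intro a _
        ring

lemma sum_Icc_telescope (G : ℕ → ℝ) (n : ℕ) :
    ∑ t ∈ Icc 1 n, (G t - G (t+1)) = G 1 - G (n+1) := by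
  induction n with
  | zero => simp
  | succ n ih =>
    rw [Finset.sum_Icc_succ_top (by omega : 1 ≤ n + 1), ih]
    ring

lemma sum_Icc_shift (f : ℕ → ℝ) (n : ℕ) :
    ∑ t ∈ Icc 2 (n+1), f t = ∑ t ∈ Icc 1 n, f (t+1) := by
  induction n with
  | zero => simp
  | succ n ih =>
    rw [Finset.sum_Icc_succ_top (by omega : 2 ≤ n + 1 + 1),
      Finset.sum_Icc_succ_top (by omega : 1 ≤ n + 1), ih]

lemma combine_sum {𝒜 : Type*} [Fintype 𝒜] (P Q Lm l : 𝒜 → ℝ) (c : ℝ) :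
    ∑ a, (P a - Q a) * (Lm a + (l a + c))
      = (∑ a, P a * l a) + (∑ a, P a * Lm a) - (∑ a, Q a * (Lm a + l a))
        + c * ((∑ a, P a) - ∑ a, Q a) := by
  simp only [Finset.mul_sum, ← Finset.sum_sub_distrib, ← Finset.sum_add_distrib]
  apply Finset.sum_congr rfl
  intro a _
  ring
lemma hH1_arith (F PL QL SpT SpT1 St xi xt e0 e1 stepL : ℝ)
    (hcomb : stepL = F + PL - QL + xt * (1 - 1))
    (hstep' : stepL ≤ 2/e0 * SpT - 2/e0 * SpT1 + St)
    (hprod : (1/e1 - 1/e0) * SpT1 ≤ (1/e1 - 1/e0) * (xi + 1)) :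
    F + (PL - 2/e0 * SpT) - (QL - 2/e1 * SpT1)
      ≤ St + 2 * (1/e1 - 1/e0) * xi + (2/e1 - 2/e0) := by
  ring_nf at hcomb hstep' hprod ⊢
  linarith

lemma hH2_arith (F PL UL SpT Su St xt e0 stepL : ℝ)
    (hcomb : stepL = F + PL - UL + xt * (1 - 1))
    (hstep' : stepL ≤ 2/e0 * SpT - 2/e0 * Su + St)
    (h5 : 2/e0 * 1 ≤ 2/e0 * Su) :
    F + (PL - 2/e0 * SpT) - UL ≤ St - 2/e0 := by
  ring_nf at hcomb hstep' h5 ⊢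
  linarith

lemma hinit_arith (s xi1 sqA e0 e1 : ℝ)
    (t1 : 0 ≤ (1/e1 - 1/e0) * (xi1 - s + 1))
    (t2 : 0 ≤ (1/e0) * (sqA - s))
    (h0 : (0:ℝ) < 1/e0) :
    (2/e1) * s - 2/e1 ≤ 2 * sqA / e0 + 2 * ((1/e1 - 1/e0) * xi1) := by
  ring_nf at t1 t2 h0 ⊢
  linarith

lemma final_arith (X1 X2 FT SL Y1 Y2 ST Z1 Z2 W TH G1 GT s1 xi1 sqA e0 e1 eT : ℝ)
    (hmain : X2 + (G1 - GT) ≤ Y2 + W + (2/eT - 2/e1))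
    (hH2 : FT + GT - SL ≤ ST - 2/eT)
    (hF : X1 = X2 + FT)
    (hSs : Y1 = Y2 + ST)
    (hpen : Z1 = (1/e1 - 1/e0) * xi1 + Z2)
    (hW : W = 2 * Z2)
    (hTH : 2 * TH = Y1)
    (hG1 : G1 = -((2/e1) * s1))
    (hinit : (2/e1) * s1 - 2/e1 ≤ 2 * sqA / e0 + 2 * ((1/e1 - 1/e0) * xi1)) :
    X1 - SL ≤ 2 * sqA / e0 + 2 * Z1 + 2 * TH := by
  ring_nf at hmain hH2 hF hSs hpen hW hTH hG1 hinit ⊢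
  linarith

set_option maxHeartbeats 1000000 in
/-- **FTRL with the (1/2)-Tsallis entropy regularizer.**
Let `|𝒜| = A`, losses `ℓ 1, …, ℓ T`, and non-increasing learning rates
`η 0 ≥ η 1 ≥ ⋯ ≥ η T > 0`.  With `ψ t p = -(2 / η t) ∑ a, √(p a)`, let `p t`
(for `1 ≤ t ≤ T`) minimize `p ↦ ⟨p, ∑_{τ=1}^{t-1} ℓ τ⟩ + ψ t p` over the probability
simplex, with all coordinates strictly positive.  If `x 1, …, x T` satisfy
`η t * √(p t a) * (ℓ t a + x t) ≥ -1/2` for all `t, a`, then for every `u` in the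
probability simplex,
`∑_{t=1}^T ⟨p t - u, ℓ t⟩ ≤ 2√A / η 0 + 2 ∑_t (1/η t - 1/η (t-1)) ξ t
  + 2 ∑_t η t ∑_a (p t a)^{3/2} (ℓ t a + x t)²`,
where `ξ t = ∑ a, √(p t a) * (1 - p t a)`. -/
theorem tsallis_ftrl_regret
    {𝒜 : Type*} [Fintype 𝒜] (A : ℕ) (hA : Fintype.card 𝒜 = A)
    (T : ℕ)
    (ℓ : ℕ → 𝒜 → ℝ)
    (η : ℕ → ℝ)
    (hη_pos : ∀ t ≤ T, 0 < η t)
    (hη_mono : ∀ t, 1 ≤ t → t ≤ T → η t ≤ η (t - 1))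
    (ψ : ℕ → (𝒜 → ℝ) → ℝ)
    (hψ : ∀ t, ψ t = fun p : 𝒜 → ℝ => -(2 / η t) * ∑ a, Real.sqrt (p a))
    (p : ℕ → 𝒜 → ℝ)
    (hp_pos : ∀ t, 1 ≤ t → t ≤ T → ∀ a, 0 < p t a)
    (hp_sum : ∀ t, 1 ≤ t → t ≤ T → ∑ a, p t a = 1)
    (hp_min : ∀ t, 1 ≤ t → t ≤ T → ∀ q : 𝒜 → ℝ, (∀ a, 0 ≤ q a) → ∑ a, q a = 1 →
      (∑ a, p t a * (∑ τ ∈ Finset.Icc 1 (t - 1), ℓ τ a)) + ψ t (p t)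
        ≤ (∑ a, q a * (∑ τ ∈ Finset.Icc 1 (t - 1), ℓ τ a)) + ψ t q)
    (x : ℕ → ℝ)
    (hx : ∀ t, 1 ≤ t → t ≤ T → ∀ a,
      η t * Real.sqrt (p t a) * (ℓ t a + x t) ≥ -(1 / 2))
    (ξ : ℕ → ℝ)
    (hξ : ∀ t, ξ t = ∑ a, Real.sqrt (p t a) * (1 - p t a))
    (u : 𝒜 → ℝ) (hu_nonneg : ∀ a, 0 ≤ u a) (hu_sum : ∑ a, u a = 1) :
    ∑ t ∈ Finset.Icc 1 T, ∑ a, (p t a - u a) * ℓ t a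
      ≤ 2 * Real.sqrt A / η 0
        + 2 * ∑ t ∈ Finset.Icc 1 T, (1 / η t - 1 / η (t - 1)) * ξ t
        + 2 * ∑ t ∈ Finset.Icc 1 T,
            η t * ∑ a, p t a ^ ((3 : ℝ) / 2) * (ℓ t a + x t) ^ 2 := by
  have hη0 : 0 < η 0 := hη_pos 0 (Nat.zero_le T)
  rcases Nat.eq_zero_or_pos T with hT0 | hT1
  · subst hT0
    simp only [show Finset.Icc 1 0 = (∅ : Finset ℕ) from by simp, Finset.sum_empty,
      mul_zero, add_zero]
    exact div_nonneg (by positivity) hη0.le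
  set G : ℕ → ℝ := fun t =>
    (∑ a, p t a * (∑ τ ∈ Finset.Icc 1 (t-1), ℓ τ a))
      - (2/η t) * ∑ a, Real.sqrt (p t a) with hG
  set S : ℕ → ℝ := fun t =>
    2 * η t * ∑ a, Real.sqrt (p t a)^3 * (ℓ t a + x t)^2 with hS
  have hmin' : ∀ t, 1 ≤ t → t ≤ T → ∀ q : 𝒜 → ℝ, (∀ a, 0 ≤ q a) → ∑ a, q a = 1 →
      (∑ a, p t a * (∑ τ ∈ Finset.Icc 1 (t-1), ℓ τ a))
          - (2/η t) * ∑ a, Real.sqrt (p t a)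
        ≤ (∑ a, q a * (∑ τ ∈ Finset.Icc 1 (t-1), ℓ τ a))
          - (2/η t) * ∑ a, Real.sqrt (q a) := by
    intro t ht1 ht2 q hqn hqs
    have h := hp_min t ht1 ht2 q hqn hqs
    rw [hψ] at h
    simp only [neg_mul] at h
    linarith
  have hstep : ∀ t, 1 ≤ t → t ≤ T → ∀ q : 𝒜 → ℝ, (∀ a, 0 ≤ q a) → ∑ a, q a = 1 →
      ∑ a, (p t a - q a) * ((∑ τ ∈ Finset.Icc 1 (t-1), ℓ τ a) + (ℓ t a + x t))
        ≤ (2/η t) * (∑ a, Real.sqrt (p t a)) - (2/η t) * (∑ a, Real.sqrt (q a)) + S t := by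
    intro t ht1 ht2 q hqn hqs
    exact ftrl_step (hη_pos t ht2) (fun a => ∑ τ ∈ Finset.Icc 1 (t-1), ℓ τ a)
      (fun a => ℓ t a + x t) (hp_pos t ht1 ht2) (hp_sum t ht1 ht2)
      (hmin' t ht1 ht2) hqn hqs (fun a => hx t ht1 ht2 a)
  have hp_le_one : ∀ t, 1 ≤ t → t ≤ T → ∀ a, p t a ≤ 1 := by
    intro t ht1 ht2 a
    rw [← hp_sum t ht1 ht2]
    exact Finset.single_le_sum (fun b _ => (hp_pos t ht1 ht2 b).le) (Finset.mem_univ a)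
  have hXi : ∀ t, 1 ≤ t → t ≤ T → ∑ a, Real.sqrt (p t a) ≤ ξ t + 1 := by
    intro t ht1 ht2
    rw [hξ]
    have h1 : ∀ a : 𝒜, Real.sqrt (p t a)
        ≤ Real.sqrt (p t a) * (1 - p t a) + p t a := by
      intro a
      have h2 : Real.sqrt (p t a) ≤ 1 := Real.sqrt_le_one.mpr (hp_le_one t ht1 ht2 a)
      have h3 := (hp_pos t ht1 ht2 a).le
      nlinarith
    calc ∑ a, Real.sqrt (p t a)
        ≤ ∑ a, (Real.sqrt (p t a) * (1 - p t a) + p t a) :=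
          Finset.sum_le_sum fun a _ => h1 a
      _ = (∑ a, Real.sqrt (p t a) * (1 - p t a)) + ∑ a, p t a :=
          Finset.sum_add_distrib
      _ = (∑ a, Real.sqrt (p t a) * (1 - p t a)) + 1 := by rw [hp_sum t ht1 ht2]
  have hmono' : ∀ t, 1 ≤ t → t ≤ T → 0 ≤ 1/η t - 1/η (t-1) := by
    intro t ht1 ht2
    have h1 := hη_pos t ht2
    have h2 := hη_mono t ht1 ht2
    have h3 := one_div_le_one_div_of_le h1 h2
    linarith
  have hH1 : ∀ t, 1 ≤ t → t + 1 ≤ T →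
      (∑ a, p t a * ℓ t a) + G t - G (t+1)
        ≤ S t + 2 * (1/η (t+1) - 1/η t) * ξ (t+1) + (2/η (t+1) - 2/η t) := by
    intro t ht1 ht2
    have ht2' : t ≤ T := by omega
    have hq_pos := hp_pos (t+1) (by omega) ht2
    have hq_sum := hp_sum (t+1) (by omega) ht2
    have hstep' := hstep t ht1 ht2' (p (t+1)) (fun a => (hq_pos a).le) hq_sum
    have hcomb := combine_sum (p t) (p (t+1))
      (fun a => ∑ τ ∈ Finset.Icc 1 (t-1), ℓ τ a) (ℓ t) (x t)
    have hQL : ∑ a, p (t+1) a * ((∑ τ ∈ Finset.Icc 1 (t-1), ℓ τ a) + ℓ t a)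
        = ∑ a, p (t+1) a * (∑ τ ∈ Finset.Icc 1 ((t+1)-1), ℓ τ a) := by
      apply Finset.sum_congr rfl
      intro a _
      congr 1
      rw [show (t+1) - 1 = (t-1) + 1 from by omega,
        Finset.sum_Icc_succ_top (by omega : 1 ≤ (t-1) + 1),
        show (t-1) + 1 = t from by omega]
    rw [hQL, hp_sum t ht1 ht2', hq_sum] at hcomb
    have hxi := hXi (t+1) (by omega) ht2
    have hmono2 := hmono' (t+1) (by omega) ht2
    rw [show (t+1) - 1 = t from by omega] at hmono2
    have hprod : (1/η (t+1) - 1/η t) * (∑ a, Real.sqrt (p (t+1) a))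
        ≤ (1/η (t+1) - 1/η t) * (ξ (t+1) + 1) :=
      mul_le_mul_of_nonneg_left hxi hmono2
    simp only [hG, hS] at hstep' hcomb ⊢
    exact hH1_arith _ _ _ _ _ _ _ _ _ _ _ hcomb hstep' hprod
  have hH2 : (∑ a, p T a * ℓ T a) + G T - (∑ a, u a * (∑ τ ∈ Finset.Icc 1 T, ℓ τ a))
      ≤ S T - 2/η T := by
    have hstep' := hstep T hT1 le_rfl u hu_nonneg hu_sum
    have hcomb := combine_sum (p T) u
      (fun a => ∑ τ ∈ Finset.Icc 1 (T-1), ℓ τ a) (ℓ T) (x T)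
    have hQL : ∑ a, u a * ((∑ τ ∈ Finset.Icc 1 (T-1), ℓ τ a) + ℓ T a)
        = ∑ a, u a * (∑ τ ∈ Finset.Icc 1 T, ℓ τ a) := by
      apply Finset.sum_congr rfl
      intro a _
      congr 1
      have htop := Finset.sum_Icc_succ_top (by omega : 1 ≤ (T-1) + 1) (fun τ => ℓ τ a)
      rw [show (T-1) + 1 = T from by omega] at htop
      rw [htop]
    rw [hQL, hp_sum T hT1 le_rfl, hu_sum] at hcomb
    have hu_sqrt : (1:ℝ) ≤ ∑ a, Real.sqrt (u a) := by
      rw [← hu_sum]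
      apply Finset.sum_le_sum
      intro a _
      have h1 := hu_nonneg a
      have h2 : u a ≤ 1 := by
        rw [← hu_sum]
        exact Finset.single_le_sum (fun b _ => hu_nonneg b) (Finset.mem_univ a)
      rw [Real.le_sqrt h1 h1]
      nlinarith
    have hηT : 0 < η T := hη_pos T le_rfl
    have h5 : (2/η T) * (1:ℝ) ≤ (2/η T) * ∑ a, Real.sqrt (u a) :=
      mul_le_mul_of_nonneg_left hu_sqrt (by positivity)
    simp only [hG, hS] at hstep' hcomb ⊢
    exact hH2_arith _ _ _ _ _ _ _ _ _ hcomb hstep' h5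
  have hTsub : T - 1 + 1 = T := by omega
  have hsum1 : ∑ t ∈ Finset.Icc 1 (T-1), ((∑ a, p t a * ℓ t a) + G t - G (t+1))
      ≤ ∑ t ∈ Finset.Icc 1 (T-1),
          (S t + 2 * (1/η (t+1) - 1/η t) * ξ (t+1) + (2/η (t+1) - 2/η t)) := by
    apply Finset.sum_le_sum
    intro t ht
    rw [Finset.mem_Icc] at ht
    exact hH1 t ht.1 (by omega)
  have hLHS : ∑ t ∈ Finset.Icc 1 (T-1), ((∑ a, p t a * ℓ t a) + G t - G (t+1))
      = (∑ t ∈ Finset.Icc 1 (T-1), ∑ a, p t a * ℓ t a) + (G 1 - G T) := by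
    have h1 : ∀ t : ℕ, (∑ a, p t a * ℓ t a) + G t - G (t+1)
        = (∑ a, p t a * ℓ t a) + (G t - G (t+1)) := fun t => by ring
    simp only [h1]
    rw [Finset.sum_add_distrib, sum_Icc_telescope G (T-1), hTsub]
  have hRHS : ∑ t ∈ Finset.Icc 1 (T-1),
        (S t + 2 * (1/η (t+1) - 1/η t) * ξ (t+1) + (2/η (t+1) - 2/η t))
      = (∑ t ∈ Finset.Icc 1 (T-1), S t)
        + (∑ t ∈ Finset.Icc 2 T, 2 * (1/η t - 1/η (t-1)) * ξ t)
        + (2/η T - 2/η 1) := by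
    rw [Finset.sum_add_distrib, Finset.sum_add_distrib]
    congr 1
    · congr 1
      have hshift := sum_Icc_shift (fun t => 2 * (1/η t - 1/η (t-1)) * ξ t) (T-1)
      rw [hTsub] at hshift
      rw [hshift]
      apply Finset.sum_congr rfl
      intro t _
      simp [Nat.add_sub_cancel]
    · have h2 : ∀ t : ℕ, 2/η (t+1) - 2/η t = -((2/η t) - (2/η (t+1))) := fun t => by ring
      simp only [h2]
      rw [Finset.sum_neg_distrib, sum_Icc_telescope (fun t => 2/η t) (T-1), hTsub]
      ring
  have hF_split : ∑ t ∈ Finset.Icc 1 T, ∑ a, p t a * ℓ t a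
      = (∑ t ∈ Finset.Icc 1 (T-1), ∑ a, p t a * ℓ t a) + ∑ a, p T a * ℓ T a := by
    have h := Finset.sum_Icc_succ_top (by omega : 1 ≤ (T-1) + 1)
      (fun t => ∑ a, p t a * ℓ t a)
    rw [hTsub] at h
    exact h
  have hS_split : ∑ t ∈ Finset.Icc 1 T, S t
      = (∑ t ∈ Finset.Icc 1 (T-1), S t) + S T := by
    have h := Finset.sum_Icc_succ_top (by omega : 1 ≤ (T-1) + 1) S
    rw [hTsub] at h
    exact h
  have hpen_split : ∑ t ∈ Finset.Icc 1 T, (1/η t - 1/η (t-1)) * ξ t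
      = (1/η 1 - 1/η 0) * ξ 1 + ∑ t ∈ Finset.Icc 2 T, (1/η t - 1/η (t-1)) * ξ t := by
    have hicc : Finset.Icc 2 T = (Finset.Icc 1 T).erase 1 := by
      ext y
      simp only [Finset.mem_Icc, Finset.mem_erase]
      omega
    rw [hicc]
    exact (Finset.add_sum_erase _ (fun t => (1/η t - 1/η (t-1)) * ξ t)
      (Finset.mem_Icc.mpr ⟨le_rfl, hT1⟩)).symm
  have hpen2 : ∑ t ∈ Finset.Icc 2 T, 2 * (1/η t - 1/η (t-1)) * ξ t
      = 2 * ∑ t ∈ Finset.Icc 2 T, (1/η t - 1/η (t-1)) * ξ t := by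
    rw [Finset.mul_sum]
    exact Finset.sum_congr rfl fun t _ => by ring
  have hthird : 2 * ∑ t ∈ Finset.Icc 1 T,
        η t * ∑ a, p t a ^ ((3:ℝ)/2) * (ℓ t a + x t) ^ 2
      = ∑ t ∈ Finset.Icc 1 T, S t := by
    rw [Finset.mul_sum]
    apply Finset.sum_congr rfl
    intro t ht
    rw [Finset.mem_Icc] at ht
    have hin : ∀ a : 𝒜, p t a ^ ((3:ℝ)/2) = Real.sqrt (p t a) ^ 3 := by
      intro a
      have hpa := (hp_pos t ht.1 ht.2 a).le
      rw [Real.sqrt_eq_rpow, ← Real.rpow_natCast (p t a ^ ((1:ℝ)/2)) 3,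
        ← Real.rpow_mul hpa]
      norm_num
    simp only [hS, hin]
    ring
  have hG1 : G 1 = -((2/η 1) * ∑ a, Real.sqrt (p 1 a)) := by
    simp only [hG]
    norm_num
  have hsqA : ∑ a, Real.sqrt (p 1 a) ≤ Real.sqrt A := by
    have h1 : (∑ a, Real.sqrt (p 1 a))^2 ≤ (A:ℝ) := by
      have h2 := sq_sum_le_card_mul_sum_sq
        (s := (Finset.univ : Finset 𝒜)) (f := fun a => Real.sqrt (p 1 a))
      have h3 : ∑ a, Real.sqrt (p 1 a) ^ 2 = ∑ a, p 1 a := by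
        apply Finset.sum_congr rfl
        intro a _
        exact Real.sq_sqrt (hp_pos 1 le_rfl hT1 a).le
      rw [h3, hp_sum 1 le_rfl hT1] at h2
      simpa [hA, Finset.card_univ] using h2
    have h4 : (0:ℝ) ≤ ∑ a, Real.sqrt (p 1 a) :=
      Finset.sum_nonneg fun a _ => Real.sqrt_nonneg _
    rw [Real.le_sqrt h4 (by positivity)]
    exact h1
  have hxi1 : ∑ a, Real.sqrt (p 1 a) ≤ ξ 1 + 1 := hXi 1 le_rfl hT1
  have hmono1 : 0 ≤ 1/η 1 - 1/η 0 := by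
    have h := hmono' 1 le_rfl hT1
    simpa using h
  have hη1 : 0 < η 1 := hη_pos 1 hT1
  have hinit : (2/η 1) * (∑ a, Real.sqrt (p 1 a)) - 2/η 1
      ≤ 2 * Real.sqrt A / η 0 + 2 * ((1/η 1 - 1/η 0) * ξ 1) := by
    have hA0 : (0:ℝ) < 1/η 0 := by positivity
    have t1 : 0 ≤ (1/η 1 - 1/η 0) * (ξ 1 - (∑ a, Real.sqrt (p 1 a)) + 1) :=
      mul_nonneg hmono1 (by linarith)
    have t2 : 0 ≤ (1/η 0) * (Real.sqrt A - ∑ a, Real.sqrt (p 1 a)) :=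
      mul_nonneg hA0.le (by linarith)
    exact hinit_arith _ _ _ _ _ t1 t2 hA0
  have hgoal_eq : ∑ t ∈ Finset.Icc 1 T, ∑ a, (p t a - u a) * ℓ t a
      = (∑ t ∈ Finset.Icc 1 T, ∑ a, p t a * ℓ t a)
        - ∑ a, u a * (∑ τ ∈ Finset.Icc 1 T, ℓ τ a) := by
    have h1 : ∀ t ∈ Finset.Icc 1 T, ∑ a, (p t a - u a) * ℓ t a
        = (∑ a, p t a * ℓ t a) - ∑ a, u a * ℓ t a := by
      intro t _
      rw [← Finset.sum_sub_distrib]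
      exact Finset.sum_congr rfl fun a _ => by ring
    rw [Finset.sum_congr rfl h1, Finset.sum_sub_distrib]
    congr 1
    rw [Finset.sum_comm]
    exact Finset.sum_congr rfl fun a _ => by rw [Finset.mul_sum]
  rw [hgoal_eq]
  have hmain := hsum1
  rw [hLHS, hRHS] at hmain
  exact final_arith _ _ _ _ _ _ _ _ _ _ _ _ _ _ _ _ _ _ _
    hmain hH2 hF_split hS_split hpen_split hpen2 hthird hG1 hinit
end

section
/- In an episodic layered MDP, for any policy π, any two transition kernels P₁ and P₂ (each respecting the layered structure), and any state s, μ^{P₁,π}(s) − μ^{P₂,π}(s) = Σ_{(u,v,w)∈𝒮×𝒜×𝒮} μ^{P₁,π}(u,v) [P₁(w|u,v) − P₂(w|u,v)] μ^{P₂,π}(s|w) and also μ^{P₁,π}(s) − μ^{P₂,π}(s) = Σ_{(u,v,w)∈𝒮×𝒜×𝒮} μ^{P₂,π}(u,v) [P₁(w|u,v) − P₂(w|u,v)] μ^{P₁,π}(s|w). -/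
open Finset

/-- An episodic layered MDP skeleton: a finite state set partitioned into layers
`0, 1, …, H`, with a unique initial state `s0` on layer `0` and a unique terminal
state `sH` on layer `H`. -/
structure LayeredMDP (S : Type*) [Fintype S] where
  /-- the horizon -/
  H : ℕ
  /-- the layer of each state -/
  layer : S → ℕ
  layer_le : ∀ s, layer s ≤ H
  /-- the initial state -/
  s0 : S
  /-- the terminal state -/
  sH : S
  layer_s0 : layer s0 = 0
  layer_sH : layer sH = H
  init_unique : ∀ s, layer s = 0 → s = s0
  final_unique : ∀ s, layer s = H → s = sH

variable {S A : Type*} [Fintype S] [Fintype A] [DecidableEq S]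

/-- `P` is a transition kernel respecting the layered structure: `P s a` is a
probability distribution (for non-terminal layers) supported on the next layer. -/
def IsTransitionKernel (M : LayeredMDP S) (P : S → A → S → ℝ) : Prop :=
  (∀ s a s', 0 ≤ P s a s') ∧
  (∀ s a, M.layer s < M.H → ∑ s', P s a s' = 1) ∧
  (∀ s a s', P s a s' ≠ 0 → M.layer s' = M.layer s + 1)

/-- `π` is a policy: `π s` is a probability distribution over actions for each state. -/
def IsPolicy (π : S → A → ℝ) : Prop :=
  (∀ s a, 0 ≤ π s a) ∧ ∀ s, ∑ a, π s a = 1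

/-- The state distribution after `h` steps, starting from the initial state `s0`,
following policy `π` under transition kernel `P`. -/
noncomputable def occLayer (M : LayeredMDP S) (P : S → A → S → ℝ) (π : S → A → ℝ) :
    ℕ → S → ℝ
  | 0 => fun s => if s = M.s0 then 1 else 0
  | h + 1 => fun s => ∑ u : S, ∑ a : A, occLayer M P π h u * π u a * P u a s

/-- The occupancy measure `μ^{P,π}(s)`: the probability that the trajectory visits
state `s` (states on layer `h` can only be visited at step `h`). -/
noncomputable def occ (M : LayeredMDP S) (P : S → A → S → ℝ) (π : S → A → ℝ)
    (s : S) : ℝ :=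
  occLayer M P π (M.layer s) s

/-- The state-action occupancy measure `μ^{P,π}(s,a)`. -/
noncomputable def occSA (M : LayeredMDP S) (P : S → A → S → ℝ) (π : S → A → ℝ)
    (s : S) (a : A) : ℝ :=
  occ M P π s * π s a

/-- The state distribution after `k` steps started from state `w`, following policy
`π` under transition kernel `P`. -/
noncomputable def reachLayer (M : LayeredMDP S) (P : S → A → S → ℝ) (π : S → A → ℝ)
    (w : S) : ℕ → S → ℝ
  | 0 => fun s => if s = w then 1 else 0
  | k + 1 => fun s => ∑ u : S, ∑ a : A, reachLayer M P π w k u * π u a * P u a s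

/-- The conditional occupancy `μ^{P,π}(s | w)`: the probability of visiting `s` given
that the trajectory is at state `w` (equal to `1` if `s = w`, and `0` if `s ≠ w` lies
in a layer at or below that of `w`). -/
noncomputable def condOcc (M : LayeredMDP S) (P : S → A → S → ℝ) (π : S → A → ℝ)
    (w s : S) : ℝ :=
  if M.layer w ≤ M.layer s then reachLayer M P π w (M.layer s - M.layer w) s else 0

/-- The value function with `k` remaining steps:
`Vdepth 0 s = 0` and `Vdepth (k+1) s = ∑ a, π(a|s) (ℓ(s,a) + ∑ s', P(s'|s,a) Vdepth k s')`. -/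
noncomputable def Vdepth (M : LayeredMDP S) (P : S → A → S → ℝ) (π : S → A → ℝ)
    (ℓ : S → A → ℝ) : ℕ → S → ℝ
  | 0 => fun _ => 0
  | k + 1 => fun s => ∑ a : A, π s a * (ℓ s a + ∑ s' : S, P s a s' * Vdepth M P π ℓ k s')

/-- The state value function `V^{P,π}(s; ℓ)`. -/
noncomputable def Vval (M : LayeredMDP S) (P : S → A → S → ℝ) (π : S → A → ℝ)
    (ℓ : S → A → ℝ) (s : S) : ℝ :=
  Vdepth M P π ℓ (M.H - M.layer s) s

/-- The state-action value function `Q^{P,π}(s,a; ℓ)`. -/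
noncomputable def Qval (M : LayeredMDP S) (P : S → A → S → ℝ) (π : S → A → ℝ)
    (ℓ : S → A → ℝ) (s : S) (a : A) : ℝ :=
  ℓ s a + ∑ s' : S, P s a s' * Vval M P π ℓ s'


section Aux

variable {S A : Type*} [Fintype S] [Fintype A] [DecidableEq S]

lemma occLayer_eq_zero (M : LayeredMDP S) (P : S → A → S → ℝ) (π : S → A → ℝ)
    (hP : ∀ s a s', P s a s' ≠ 0 → M.layer s' = M.layer s + 1) :
    ∀ (h : ℕ) (u : S), M.layer u ≠ h → occLayer M P π h u = 0 := by
  intro h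
  induction h with
  | zero =>
    intro u hu
    simp only [occLayer]
    rw [if_neg]
    intro hs; exact hu (hs ▸ M.layer_s0)
  | succ h ih =>
    intro u hu
    simp only [occLayer]
    refine Finset.sum_eq_zero fun x _ => Finset.sum_eq_zero fun a _ => ?_
    rcases eq_or_ne (M.layer x) h with hx | hx
    · rcases eq_or_ne (P x a u) 0 with hp | hp
      · rw [hp, mul_zero]
      · exact absurd (hP x a u hp ▸ congrArg (· + 1) hx) hu
    · rw [ih x hx, zero_mul, zero_mul]

lemma reachLayer_succ' (M : LayeredMDP S) (P : S → A → S → ℝ) (π : S → A → ℝ)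
    (w : S) : ∀ (k : ℕ) (s : S),
    reachLayer M P π w (k + 1) s = ∑ u : S, ∑ a : A, π w a * P w a u * reachLayer M P π u k s := by
  have helper4 : ∀ (f : S → A → S → A → ℝ),
      (∑ u : S, ∑ a : A, ∑ x : S, ∑ b : A, f u a x b)
        = ∑ x : S, ∑ b : A, ∑ u : S, ∑ a : A, f u a x b := by
    intro f
    have e1 : ∀ u : S, (∑ a : A, ∑ x : S, ∑ b : A, f u a x b)
        = ∑ x : S, ∑ a : A, ∑ b : A, f u a x b := fun u => Finset.sum_comm
    rw [Finset.sum_congr rfl fun u _ => e1 u, Finset.sum_comm]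
    refine Finset.sum_congr rfl fun x _ => ?_
    have e2 : ∀ u : S, (∑ a : A, ∑ b : A, f u a x b)
        = ∑ b : A, ∑ a : A, f u a x b := fun u => Finset.sum_comm
    rw [Finset.sum_congr rfl fun u _ => e2 u, Finset.sum_comm]
  intro k
  induction k with
  | zero =>
    intro s
    have hl : reachLayer M P π w (0 + 1) s = ∑ a : A, π w a * P w a s := by
      show (∑ u : S, ∑ a : A, (if u = w then (1:ℝ) else 0) * π u a * P u a s) = _
      rw [Finset.sum_eq_single w (fun b _ hb => by simp [hb])
        (fun hb => absurd (Finset.mem_univ w) hb)]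
      simp
    have hr : (∑ u : S, ∑ a : A, π w a * P w a u * reachLayer M P π u 0 s)
        = ∑ a : A, π w a * P w a s := by
      rw [Finset.sum_comm]
      refine Finset.sum_congr rfl fun a _ => ?_
      show (∑ u : S, π w a * P w a u * (if s = u then (1:ℝ) else 0)) = _
      rw [Finset.sum_eq_single s (fun b _ hb => by rw [if_neg (Ne.symm hb), mul_zero])
        (fun hb => absurd (Finset.mem_univ s) hb)]
      rw [if_pos rfl, mul_one]
    rw [hl, hr]
  | succ k ih =>
    intro s
    have : reachLayer M P π w (k + 1 + 1) s
        = ∑ u : S, ∑ a : A, reachLayer M P π w (k + 1) u * π u a * P u a s := rfl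
    rw [this]
    have h2 : ∀ u a, reachLayer M P π w (k + 1) u * π u a * P u a s
        = ∑ x : S, ∑ b : A, π w b * P w b x * (reachLayer M P π x k u * π u a * P u a s) := by
      intro u a
      rw [ih u, Finset.sum_mul, Finset.sum_mul]
      refine Finset.sum_congr rfl fun x _ => ?_
      rw [Finset.sum_mul, Finset.sum_mul]
      refine Finset.sum_congr rfl fun b _ => by ring
    calc ∑ u : S, ∑ a : A, reachLayer M P π w (k + 1) u * π u a * P u a s
        = ∑ u : S, ∑ a : A, ∑ x : S, ∑ b : A,
            π w b * P w b x * (reachLayer M P π x k u * π u a * P u a s) := by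
          exact Finset.sum_congr rfl fun u _ => Finset.sum_congr rfl fun a _ => h2 u a
      _ = ∑ x : S, ∑ b : A, ∑ u : S, ∑ a : A,
            π w b * P w b x * (reachLayer M P π x k u * π u a * P u a s) := helper4 _
      _ = ∑ x : S, ∑ b : A, π w b * P w b x * reachLayer M P π x (k + 1) s := by
          refine Finset.sum_congr rfl fun x _ => Finset.sum_congr rfl fun b _ => ?_
          have : reachLayer M P π x (k + 1) s
              = ∑ u : S, ∑ a : A, reachLayer M P π x k u * π u a * P u a s := rfl
          rw [this, Finset.mul_sum]
          refine Finset.sum_congr rfl fun u _ => ?_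
          rw [Finset.mul_sum]

lemma reachLayer_s0 (M : LayeredMDP S) (P : S → A → S → ℝ) (π : S → A → ℝ) :
    ∀ (k : ℕ) (s : S), reachLayer M P π M.s0 k s = occLayer M P π k s := by
  intro k
  induction k with
  | zero => intro s; rfl
  | succ k ih =>
    intro s
    show (∑ u : S, ∑ a : A, reachLayer M P π M.s0 k u * π u a * P u a s) = _
    simp only [occLayer]
    exact Finset.sum_congr rfl fun u _ => Finset.sum_congr rfl fun a _ => by rw [ih]

lemma key_diff (M : LayeredMDP S) (P Q : S → A → S → ℝ)
    (hP : ∀ s a s', P s a s' ≠ 0 → M.layer s' = M.layer s + 1)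
    (hQ : ∀ s a s', Q s a s' ≠ 0 → M.layer s' = M.layer s + 1)
    (π : S → A → ℝ) (s : S) :
    occ M P π s - occ M Q π s
      = ∑ u : S, ∑ v : A, ∑ w : S,
          occSA M P π u v * (P u v w - Q u v w) * condOcc M Q π w s := by
  set h := M.layer s with hh
  set g : ℕ → ℝ := fun j => ∑ w : S, occLayer M P π j w * reachLayer M Q π w (h - j) s with hg
  have hg0 : g 0 = occ M Q π s := by
    show (∑ w : S, (if w = M.s0 then (1:ℝ) else 0) * reachLayer M Q π w (h - 0) s) = _
    rw [Finset.sum_eq_single M.s0 (fun b _ hb => by rw [if_neg hb, zero_mul])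
      (fun hb => absurd (Finset.mem_univ M.s0) hb)]
    rw [if_pos rfl, one_mul, Nat.sub_zero]
    exact reachLayer_s0 M Q π h s
  have hgh : g h = occ M P π s := by
    show (∑ w : S, occLayer M P π h w * reachLayer M Q π w (h - h) s) = _
    rw [Nat.sub_self]
    rw [Finset.sum_eq_single s
      (fun b _ hb => by
        show occLayer M P π h b * (if s = b then (1:ℝ) else 0) = 0
        rw [if_neg (Ne.symm hb), mul_zero])
      (fun hb => absurd (Finset.mem_univ s) hb)]
    show occLayer M P π h s * (if s = s then (1:ℝ) else 0) = occ M P π s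
    rw [if_pos rfl, mul_one]
    rfl
  have hstep : ∀ j < h, g (j + 1) - g j
      = ∑ u : S, ∑ a : A, ∑ w : S,
          occLayer M P π j u * π u a * (P u a w - Q u a w) * reachLayer M Q π w (h - (j + 1)) s := by
    intro j hj
    set k := h - (j + 1) with hk
    have hhj : h - j = k + 1 := by omega
    have c1 : g (j + 1) = ∑ u : S, ∑ a : A, ∑ w : S,
        occLayer M P π j u * π u a * P u a w * reachLayer M Q π w k s := by
      simp only [hg, hk]
      have : ∀ w : S, occLayer M P π (j + 1) w * reachLayer M Q π w (h - (j + 1)) s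
          = ∑ u : S, ∑ a : A,
              occLayer M P π j u * π u a * P u a w * reachLayer M Q π w (h - (j + 1)) s := by
        intro w
        show (∑ u : S, ∑ a : A, occLayer M P π j u * π u a * P u a w) * _ = _
        rw [Finset.sum_mul]
        exact Finset.sum_congr rfl fun u _ => by rw [Finset.sum_mul]
      rw [Finset.sum_congr rfl fun w _ => this w, Finset.sum_comm]
      exact Finset.sum_congr rfl fun u _ => Finset.sum_comm
    have c2 : g j = ∑ u : S, ∑ a : A, ∑ w : S,
        occLayer M P π j u * π u a * Q u a w * reachLayer M Q π w k s := by
      simp only [hg, hhj]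
      have : ∀ u : S, occLayer M P π j u * reachLayer M Q π u (k + 1) s
          = ∑ a : A, ∑ w : S,
              occLayer M P π j u * π u a * Q u a w * reachLayer M Q π w k s := by
        intro u
        rw [reachLayer_succ', Finset.mul_sum, Finset.sum_comm]
        refine Finset.sum_congr rfl fun a _ => ?_
        rw [Finset.mul_sum]
        exact Finset.sum_congr rfl fun w _ => by ring
      exact Finset.sum_congr rfl fun u _ => this u
    rw [c1, c2, ← Finset.sum_sub_distrib]
    refine Finset.sum_congr rfl fun u _ => ?_
    rw [← Finset.sum_sub_distrib]
    refine Finset.sum_congr rfl fun a _ => ?_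
    rw [← Finset.sum_sub_distrib]
    exact Finset.sum_congr rfl fun w _ => by ring
  have tele : occ M P π s - occ M Q π s
      = ∑ j ∈ Finset.range h, (g (j + 1) - g j) := by
    rw [Finset.sum_range_sub g h, hg0, hgh]
  rw [tele, Finset.sum_congr rfl fun j hj => hstep j (Finset.mem_range.mp hj)]
  -- swap the range sum inside
  rw [Finset.sum_comm]
  refine Finset.sum_congr rfl fun u _ => ?_
  rw [Finset.sum_comm]
  refine Finset.sum_congr rfl fun a _ => ?_
  rw [Finset.sum_comm]
  refine Finset.sum_congr rfl fun w _ => ?_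
  -- now termwise: ∑ j in range h, ... = occSA * Δ * condOcc
  rcases eq_or_ne (P u a w - Q u a w) 0 with hΔ | hΔ
  · simp [hΔ]
  · have hw : M.layer w = M.layer u + 1 := by
      rcases eq_or_ne (P u a w) 0 with hp | hp
      · exact hQ u a w (by intro hq; exact hΔ (by rw [hp, hq, sub_zero])) 
      · exact hP u a w hp
    rcases lt_or_ge (M.layer u) h with hu | hu
    · rw [Finset.sum_eq_single (M.layer u)]
      · have hcond : condOcc M Q π w s = reachLayer M Q π w (h - (M.layer u + 1)) s := by
          simp only [condOcc]
          rw [if_pos (by omega)]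
          congr 1
          omega
        rw [hcond]
        simp only [occSA, occ]
      · intro j _ hj
        rw [occLayer_eq_zero M P π hP j u (fun hc => hj hc.symm), zero_mul, zero_mul, zero_mul]
      · intro hc; exact absurd (Finset.mem_range.mpr hu) hc
    · have h1 : ∀ j ∈ Finset.range h, occLayer M P π j u * π u a * (P u a w - Q u a w) * reachLayer M Q π w (h - (j + 1)) s = 0 := by
        intro j hj
        have : M.layer u ≠ j := by have := Finset.mem_range.mp hj; omega
        rw [occLayer_eq_zero M P π hP j u this, zero_mul, zero_mul, zero_mul]
      rw [Finset.sum_eq_zero h1]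
      have hcond : condOcc M Q π w s = 0 := by
        simp only [condOcc]
        rw [if_neg (by omega)]
      rw [hcond, mul_zero]

end Aux

/-- **Occupancy measure difference lemma.**
In an episodic layered MDP, for any policy `π`, any two transition kernels `P₁, P₂`
respecting the layered structure, and any state `s`,
`μ^{P₁,π}(s) - μ^{P₂,π}(s)
  = ∑_{(u,v,w)} μ^{P₁,π}(u,v) (P₁(w|u,v) - P₂(w|u,v)) μ^{P₂,π}(s|w)
  = ∑_{(u,v,w)} μ^{P₂,π}(u,v) (P₁(w|u,v) - P₂(w|u,v)) μ^{P₁,π}(s|w)`. -/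
theorem occupancy_measure_difference
    (M : LayeredMDP S) (P₁ P₂ : S → A → S → ℝ)
    (hP₁ : IsTransitionKernel M P₁) (hP₂ : IsTransitionKernel M P₂)
    (π : S → A → ℝ) (hπ : IsPolicy π) (s : S) :
    (occ M P₁ π s - occ M P₂ π s
      = ∑ u : S, ∑ v : A, ∑ w : S,
          occSA M P₁ π u v * (P₁ u v w - P₂ u v w) * condOcc M P₂ π w s)
    ∧ (occ M P₁ π s - occ M P₂ π s
      = ∑ u : S, ∑ v : A, ∑ w : S,
          occSA M P₂ π u v * (P₁ u v w - P₂ u v w) * condOcc M P₁ π w s) := by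
  constructor
  · exact key_diff M P₁ P₂ hP₁.2.2 hP₂.2.2 π s
  · have h2 := key_diff M P₂ P₁ hP₂.2.2 hP₁.2.2 π s
    have : occ M P₁ π s - occ M P₂ π s = -(occ M P₂ π s - occ M P₁ π s) := by ring
    rw [this, h2, ← Finset.sum_neg_distrib]
    refine Finset.sum_congr rfl fun u _ => ?_
    rw [← Finset.sum_neg_distrib]
    refine Finset.sum_congr rfl fun v _ => ?_
    rw [← Finset.sum_neg_distrib]
    exact Finset.sum_congr rfl fun w _ => by ring
end

section
/- Let η₁ > 0 and let (φ_t)_{t≥1} be nonnegative reals. Define η₂, η₃, … by the recursion 1/η_{t+1} = 1/η_t + η_t φ_t for all t ≥ 1, and suppose that φ_t ≤ η_t^{−2} for all t ≥ 1. Then for every t ≥ 1, 1/η_{t+1} ≥ (1/2) √( Σ_{τ=1}^{t+1} φ_τ ). -/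
open Finset

/-- **Learning-rate recursion lemma.**
Let `η 1 > 0` and let `φ t ≥ 0` for `t ≥ 1`.  If `1 / η (t+1) = 1 / η t + η t * φ t`
and `φ t ≤ (η t)⁻²` for all `t ≥ 1`, then for every `t ≥ 1`,
`1 / η (t+1) ≥ (1/2) √(∑_{τ=1}^{t+1} φ τ)`. -/
theorem learning_rate_recursion
    (η φ : ℕ → ℝ)
    (hη1 : 0 < η 1)
    (hφ_nonneg : ∀ t, 1 ≤ t → 0 ≤ φ t)
    (hrec : ∀ t, 1 ≤ t → 1 / η (t + 1) = 1 / η t + η t * φ t)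
    (hφ_le : ∀ t, 1 ≤ t → φ t ≤ (η t)⁻¹ ^ 2) :
    ∀ t, 1 ≤ t →
      1 / η (t + 1) ≥ (1 / 2) * Real.sqrt (∑ τ ∈ Finset.Icc 1 (t + 1), φ τ) := by
  -- positivity of η t for all t ≥ 1
  have hpos : ∀ t, 1 ≤ t → 0 < η t := by
    intro t ht
    induction t with
    | zero => omega
    | succ n ih =>
      rcases Nat.eq_or_lt_of_le ht with h | h
      · simpa [← h] using hη1
      · have hn : 1 ≤ n := by omega
        have hηn := ih hn
        have h1 : 0 < 1 / η (n + 1) := by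
          rw [hrec n hn]
          have : 0 ≤ η n * φ n := mul_nonneg hηn.le (hφ_nonneg n hn)
          have := one_div_pos.mpr hηn
          linarith
        exact one_div_pos.mp h1
  -- key : (1/η(t+1))² ≥ ∑_{τ=1}^t φ τ + (1/η 1)²
  have key : ∀ t, 1 ≤ t →
      (∑ τ ∈ Finset.Icc 1 t, φ τ) + (1 / η 1) ^ 2 ≤ (1 / η (t + 1)) ^ 2 := by
    intro t ht
    induction t with
    | zero => omega
    | succ n ih =>
      have hηn1 : 0 < η (n + 1) := hpos (n + 1) (by omega)
      have hmul : (1 / η (n + 1)) * η (n + 1) = 1 := by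
        field_simp
      rcases Nat.eq_or_lt_of_le ht with h | h
      · -- n + 1 = 1, i.e. n = 0
        have hn0 : n = 0 := by omega
        subst hn0
        rw [hrec 1 le_rfl]
        simp only [Finset.Icc_self, Finset.sum_singleton]
        have hφ1 := hφ_nonneg 1 le_rfl
        nlinarith [sq_nonneg (η 1 * φ 1), hmul]
      · have hn : 1 ≤ n := by omega
        have hsum : ∑ τ ∈ Finset.Icc 1 (n + 1), φ τ
            = (∑ τ ∈ Finset.Icc 1 n, φ τ) + φ (n + 1) := by
          rw [← Finset.sum_Icc_succ_top (by omega : 1 ≤ n + 1)]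
        rw [hsum, hrec (n + 1) (by omega)]
        have hφn1 := hφ_nonneg (n + 1) (by omega)
        have ihn := ih hn
        nlinarith [sq_nonneg (η (n + 1) * φ (n + 1)), hmul]
  intro t ht
  have hηt1 : 0 < η (t + 1) := hpos (t + 1) (by omega)
  have hηt2 : 0 < η (t + 2) := hpos (t + 2) (by omega)
  set a := 1 / η (t + 1) with ha
  have hapos : 0 < a := one_div_pos.mpr hηt1
  have hkey := key t ht
  have hφt1 : φ (t + 1) ≤ a ^ 2 := by
    have := hφ_le (t + 1) (by omega)
    simpa [ha, one_div] using this
  have hsum : ∑ τ ∈ Finset.Icc 1 (t + 1), φ τ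
      = (∑ τ ∈ Finset.Icc 1 t, φ τ) + φ (t + 1) := by
    rw [← Finset.sum_Icc_succ_top (by omega : 1 ≤ t + 1)]
  have h1 : ∑ τ ∈ Finset.Icc 1 (t + 1), φ τ ≤ (2 * a) ^ 2 := by
    rw [hsum]
    have h10 : 0 ≤ (1 / η 1) ^ 2 := sq_nonneg _
    nlinarith
  have hsqrt : Real.sqrt (∑ τ ∈ Finset.Icc 1 (t + 1), φ τ) ≤ 2 * a := by
    calc Real.sqrt (∑ τ ∈ Finset.Icc 1 (t + 1), φ τ)
        ≤ Real.sqrt ((2 * a) ^ 2) := Real.sqrt_le_sqrt h1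
      _ = 2 * a := Real.sqrt_sq (by linarith)
  linarith
end
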